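/- arXiv:1508.04406 — 6 statements merged into one kernel-verified Lean document; each statement's English description precedes it below -/
import Mathlib

section
/- For any sequence (y_i)_{i≥1} of real numbers there exists an approximating function ψ : ℕ → [0,∞) such that the series ∑_{n≥1} ψ(n) diverges, and such that for every i ≥ 1 the set of real numbers x for which the inequality ‖n·x + y_i‖ < ψ(n) holds for infinitely many integers n ≥ 1 has Lebesgue measure zero. -/
open MeasureTheory Filter Set
open scoped ENNReal

/-- Distance from a real number to the nearest integer. -/
noncomputable def nint (t : ℝ) : ℝ := |t - (round t : ℝ)|

lemma nint_nonneg (t : ℝ) : 0 ≤ nint t := abs_nonneg _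

lemma nint_le_half (t : ℝ) : nint t ≤ 1 / 2 := abs_sub_round t

lemma nint_le_abs_sub_int (t : ℝ) (j : ℤ) : nint t ≤ |t - j| := by
  rcases le_or_gt (1/2) |t - (j:ℝ)| with h | h
  · exact (nint_le_half t).trans h
  · have hj : round t = j := by
      rw [round_eq]
      have h1 : t - j < 1/2 := (abs_lt.1 h).2
      have h2 : -(1/2) < t - j := (abs_lt.1 h).1
      have : (j : ℝ) ≤ t + 1/2 := by linarith
      have h3 : t + 1/2 < j + 1 := by linarith
      exact Int.floor_eq_iff.2 ⟨this, h3⟩ |>.symm ▸ rfl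
    rw [nint, hj]

lemma nint_add_le (a b : ℝ) : nint (a + b) ≤ nint a + nint b := by
  calc nint (a + b) ≤ |a + b - ((round a + round b : ℤ) : ℝ)| :=
        nint_le_abs_sub_int _ _
    _ ≤ |a - round a| + |b - round b| := by
        push_cast
        rw [show a + b - ((round a : ℝ) + round b) = (a - round a) + (b - round b) by ring]
        exact abs_add_le _ _
    _ = nint a + nint b := rfl

lemma nint_neg (a : ℝ) : nint (-a) = nint a := by
  apply le_antisymm
  · calc nint (-a) ≤ |(-a) - ((-round a : ℤ):ℝ)| := nint_le_abs_sub_int _ _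
      _ = |a - round a| := by push_cast; rw [← abs_neg]; ring_nf
    
  · calc nint a ≤ |a - ((-round (-a) : ℤ):ℝ)| := nint_le_abs_sub_int _ _
      _ = |(-a) - round (-a)| := by push_cast; rw [← abs_neg]; ring_nf

lemma nint_sub_le (a b : ℝ) : nint (a - b) ≤ nint a + nint b := by
  rw [sub_eq_add_neg]
  calc nint (a + -b) ≤ nint a + nint (-b) := nint_add_le _ _
    _ = nint a + nint b := by rw [nint_neg]

lemma nint_nat_mul_le (m : ℕ) (a : ℝ) : nint (m * a) ≤ m * nint a := by
  induction m with
  | zero => simp [nint]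
  | succ n ih =>
      have : ((n+1 : ℕ) : ℝ) * a = (n : ℝ) * a + a := by push_cast; ring
      rw [this]
      calc nint ((n:ℝ) * a + a) ≤ nint ((n:ℝ) * a) + nint a := nint_add_le _ _
        _ ≤ n * nint a + nint a := by linarith [ih]
        _ = ((n+1 : ℕ):ℝ) * nint a := by push_cast; ring

lemma fract_close {u v : ℝ} {b : ℕ} (hb : 0 < b) (hu0 : 0 ≤ u) (hu1 : u < 1)
    (hv0 : 0 ≤ v) (hv1 : v < 1) (h : ⌊u * b⌋₊ = ⌊v * b⌋₊) : |u - v| < 1 / b := by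
  have hb' : (0:ℝ) < b := by exact_mod_cast hb
  have h1 : (⌊u * b⌋₊ : ℝ) ≤ u * b := Nat.floor_le (by positivity)
  have h2 : u * b < ⌊u * b⌋₊ + 1 := Nat.lt_floor_add_one _
  have h3 : (⌊v * b⌋₊ : ℝ) ≤ v * b := Nat.floor_le (by positivity)
  have h4 : v * b < ⌊v * b⌋₊ + 1 := Nat.lt_floor_add_one _
  rw [h] at h1 h2
  have hd1 : (u - v) * b < 1 := by nlinarith
  have hd2 : (v - u) * b < 1 := by nlinarith
  rw [abs_sub_lt_iff]
  constructor <;> rw [lt_div_iff₀ hb'] <;> linarith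

lemma box_pigeonhole (y : ℕ → ℝ) (k : ℕ) (δ : ℝ) (hδ : 0 < δ) :
    ∃ Q : ℕ, 0 < Q ∧ ∀ m : ℕ, ∃ S : Finset ℕ, m ≤ S.card ∧
      ∀ t ∈ S, 1 ≤ t ∧ t ≤ Q * (m+1) ∧ ∀ i, 1 ≤ i → i ≤ k → nint ((t:ℝ) * y i) ≤ δ := by
  set b : ℕ := max 1 ⌈δ⁻¹⌉₊ with hbdef
  have hb : 0 < b := lt_of_lt_of_le one_pos (le_max_left _ _)
  have hbδ : 1 / (b:ℝ) ≤ δ := by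
    have h1 : δ⁻¹ ≤ (b:ℝ) := le_trans (Nat.le_ceil _) (by exact_mod_cast le_max_right 1 ⌈δ⁻¹⌉₊)
    rw [div_le_iff₀ (by exact_mod_cast hb)]
    calc (1:ℝ) = δ * δ⁻¹ := by field_simp
      _ ≤ δ * b := by nlinarith
  refine ⟨b ^ k, pow_pos hb k, fun m => ?_⟩
  set Q := b ^ k
  -- the coloring map
  set F : ℕ → (Fin k → Fin b) := fun t i =>
    ⟨⌊Int.fract ((t:ℝ) * y (i+1)) * b⌋₊, by
      apply Nat.floor_lt (mul_nonneg (Int.fract_nonneg _) (by positivity)) |>.2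
      have := Int.fract_lt_one ((t:ℝ) * y (i+1))
      have hb' : (0:ℝ) < b := by exact_mod_cast hb
      nlinarith⟩ with hF
  have hcard : (Finset.univ : Finset (Fin k → Fin b)).card * (m+1)
      ≤ (Finset.range (Q*(m+1)+1)).card := by
    rw [Finset.card_univ, Fintype.card_fun, Finset.card_range]
    simp [Q, Fintype.card_fin]
  have : Nonempty (Fin k → Fin b) := ⟨fun _ => ⟨0, hb⟩⟩
  obtain ⟨col, -, hcol⟩ := Finset.exists_le_card_fiber_of_mul_le_card_of_maps_to
    (fun a _ => Finset.mem_univ (F a)) Finset.univ_nonempty hcard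
  set Φ := (Finset.range (Q*(m+1)+1)).filter (fun a => F a = col) with hΦ
  have hΦne : Φ.Nonempty := Finset.card_pos.1 (lt_of_lt_of_le (Nat.succ_pos m) hcol)
  set t₀ := Φ.min' hΦne with ht₀
  have ht₀Φ : t₀ ∈ Φ := Finset.min'_mem _ _
  refine ⟨(Φ.erase t₀).image (fun t => t - t₀), ?_, ?_⟩
  · rw [Finset.card_image_of_injOn]
    · rw [Finset.card_erase_of_mem ht₀Φ]; omega
    · intro a ha a' ha' hee
      have h1 : t₀ ≤ a := Φ.min'_le a (Finset.mem_of_mem_erase ha)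
      have h2 : t₀ ≤ a' := Φ.min'_le a' (Finset.mem_of_mem_erase ha')
      simp only at hee
      omega
  · intro s hs
    obtain ⟨t, ht, rfl⟩ := Finset.mem_image.1 hs
    have htΦ : t ∈ Φ := Finset.mem_of_mem_erase ht
    have htne : t ≠ t₀ := Finset.ne_of_mem_erase ht
    have h1 : t₀ ≤ t := Φ.min'_le t htΦ
    have htR : t < Q*(m+1)+1 := Finset.mem_range.1 (Finset.mem_filter.1 htΦ).1
    refine ⟨by omega, by omega, fun i hi1 hik => ?_⟩
    -- colors agree
    have hcols : F t = F t₀ := by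
      have e1 := (Finset.mem_filter.1 htΦ).2
      have e2 := (Finset.mem_filter.1 ht₀Φ).2
      rw [e1, e2]
    have hi' : i - 1 < k := by omega
    have hcoord : ⌊Int.fract ((t:ℝ) * y i) * b⌋₊ = ⌊Int.fract ((t₀:ℝ) * y i) * b⌋₊ := by
      have := congrFun hcols ⟨i - 1, hi'⟩
      have hii : (i - 1) + 1 = i := by omega
      rw [hF] at this
      simpa [hii] using congrArg Fin.val this
    have hclose : |Int.fract ((t:ℝ) * y i) - Int.fract ((t₀:ℝ) * y i)| < 1 / b :=
      fract_close hb (Int.fract_nonneg _) (Int.fract_lt_one _)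
        (Int.fract_nonneg _) (Int.fract_lt_one _) hcoord
    have key : nint (((t - t₀ : ℕ):ℝ) * y i)
        ≤ |Int.fract ((t:ℝ) * y i) - Int.fract ((t₀:ℝ) * y i)| := by
      have hcast : ((t - t₀ : ℕ):ℝ) = (t:ℝ) - (t₀:ℝ) := by
        push_cast [Nat.cast_sub h1]; ring
      have hid : ((t:ℝ) - t₀) * y i - ((⌊(t:ℝ) * y i⌋ - ⌊(t₀:ℝ) * y i⌋ : ℤ) : ℝ)
          = Int.fract ((t:ℝ) * y i) - Int.fract ((t₀:ℝ) * y i) := by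
        unfold Int.fract; push_cast; ring
      calc nint (((t - t₀ : ℕ):ℝ) * y i)
          ≤ |((t:ℝ) - t₀) * y i - ((⌊(t:ℝ) * y i⌋ - ⌊(t₀:ℝ) * y i⌋ : ℤ) : ℝ)| := by
            rw [hcast]; exact nint_le_abs_sub_int _ _
        _ = _ := by rw [hid]
    linarith [key, hclose, hbδ]

lemma exists_S_sum (y : ℕ → ℝ) (k : ℕ) (δ : ℝ) (hδ : 0 < δ) (C : ℝ) :
    ∃ S : Finset ℕ, (∀ t ∈ S, ∀ i, 1 ≤ i → i ≤ k → nint ((t:ℝ) * y i) ≤ δ) ∧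
      C ≤ ∑ t ∈ S, (1:ℝ)/(t+1) := by
  obtain ⟨Q, hQ, hP⟩ := box_pigeonhole y k δ hδ
  have key : ∀ r : ℕ, ∃ S : Finset ℕ, S.card = r ∧
      (∀ t ∈ S, ∀ i, 1 ≤ i → i ≤ k → nint ((t:ℝ) * y i) ≤ δ) ∧
      (∑ j ∈ Finset.range r, (1:ℝ)/((Q:ℝ)*(j+2)+1)) ≤ ∑ t ∈ S, (1:ℝ)/(t+1) := by
    intro r
    induction r with
    | zero => exact ⟨∅, by simp⟩
    | succ r ih =>
        obtain ⟨S, hScard, hSsmall, hSsum⟩ := ih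
        obtain ⟨S', hS'card, hS'⟩ := hP (r+1)
        have hnotsub : ¬ S' ⊆ S := by
          intro hsub
          have := Finset.card_le_card hsub
          omega
        obtain ⟨t, htS', htS⟩ := Finset.not_subset.1 hnotsub
        obtain ⟨ht1, htb, htsmall⟩ := hS' t htS'
        refine ⟨insert t S, ?_, ?_, ?_⟩
        · rw [Finset.card_insert_of_notMem htS, hScard]
        · intro u hu
          rcases Finset.mem_insert.1 hu with rfl | hu
          · exact htsmall
          · exact hSsmall u hu
        · rw [Finset.sum_insert htS, Finset.sum_range_succ]
          have hterm : (1:ℝ)/((Q:ℝ)*(r+2)+1) ≤ 1/(t+1) := by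
            apply one_div_le_one_div_of_le (by positivity)
            have : (t:ℝ) ≤ (Q:ℝ)*(r+2) := by exact_mod_cast htb
            linarith
          linarith
  -- divergence of the lower bound series
  have hdiv : Tendsto (fun r => ∑ j ∈ Finset.range r, (1:ℝ)/((Q:ℝ)*(j+2)+1)) atTop atTop := by
    have hcomp : ∀ r, (1/(4*(Q:ℝ))) * ∑ j ∈ Finset.range r, (1:ℝ)/(j+1)
        ≤ ∑ j ∈ Finset.range r, (1:ℝ)/((Q:ℝ)*(j+2)+1) := by
      intro r
      rw [Finset.mul_sum]
      apply Finset.sum_le_sum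
      intro j _
      rw [div_mul_div_comm, one_mul]
      apply div_le_div_of_nonneg_left one_pos.le (by positivity)
      have hQ1 : (1:ℝ) ≤ (Q:ℝ) := by exact_mod_cast hQ
      nlinarith [Nat.cast_nonneg (α := ℝ) j]
    have hh := Real.tendsto_sum_range_one_div_nat_succ_atTop
    have h4Q : (0:ℝ) < 1/(4*(Q:ℝ)) := by positivity
    have := hh.const_mul_atTop h4Q
    apply tendsto_atTop_mono hcomp
    convert this using 2 with r
  obtain ⟨r, hr⟩ := (tendsto_atTop.1 hdiv C).exists
  obtain ⟨S, -, hsm, hsum⟩ := key r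
  exact ⟨S, hsm, le_trans hr hsum⟩

noncomputable def cc (k : ℕ) : ℝ := (1/2)^k / 8

lemma cc_pos (k : ℕ) : 0 < cc k := by unfold cc; positivity

def Good (y : ℕ → ℝ) (k prevP : ℕ) (p : Finset ℕ × ℕ) : Prop :=
  (∀ t ∈ p.1, ∀ i, 1 ≤ i → i ≤ k → nint ((t:ℝ) * y i) ≤ cc k) ∧
  (8 * 2^k ≤ ∑ t ∈ p.1, (1:ℝ)/(t+1)) ∧
  (∀ t ∈ p.1, (t+1) ∣ p.2) ∧
  (∀ t ∈ p.1, prevP < p.2 / (t+1)) ∧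
  prevP < p.2

lemma stage_exists (y : ℕ → ℝ) (k prevP : ℕ) : ∃ p, Good y k prevP p := by
  obtain ⟨S, hSsmall, hSsum⟩ := exists_S_sum y k (cc k) (cc_pos k) (8 * 2^k)
  refine ⟨(S, (prevP+1) * ∏ t ∈ S, (t+1)), hSsmall, hSsum, ?_, ?_, ?_⟩
  · intro t ht
    exact Dvd.dvd.mul_left (Finset.dvd_prod_of_mem _ ht) _
  · intro t ht
    obtain ⟨R, hR⟩ := Finset.dvd_prod_of_mem (fun t => t+1) ht
    have hRpos : 0 < R := by
      rcases Nat.eq_zero_or_pos R with h | h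
      · exfalso
        have h2 : ∏ t ∈ S, (t+1) > 0 := Finset.prod_pos (fun _ _ => Nat.succ_pos _)
        rw [hR, h] at h2
        omega
      · exact h
    have : (prevP+1) * ∏ t ∈ S, (t+1) = (t+1) * ((prevP+1) * R) := by rw [hR]; ring
    simp only [this, Nat.mul_div_cancel_left _ (Nat.succ_pos t)]
    nlinarith
  · have : 0 < ∏ t ∈ S, (t+1) := Finset.prod_pos (fun _ _ => Nat.succ_pos _)
    simp only []
    nlinarith

noncomputable def PS (y : ℕ → ℝ) : ℕ → Finset ℕ × ℕ
  | 0 => (∅, 1)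
  | (k+1) => (stage_exists y (k+1) (PS y k).2).choose

lemma PS_good (y : ℕ → ℝ) (k : ℕ) : Good y (k+1) (PS y k).2 (PS y (k+1)) := by
  have : PS y (k+1) = (stage_exists y (k+1) (PS y k).2).choose := rfl
  rw [this]
  exact (stage_exists y (k+1) (PS y k).2).choose_spec

variable (y : ℕ → ℝ)

noncomputable def Pk (k : ℕ) : ℕ := (PS y k).2
noncomputable def Sk (k : ℕ) : Finset ℕ := (PS y k).1
noncomputable def blk (j : ℕ) : Finset ℕ := (Sk y (j+1)).image (fun t => Pk y (j+1) / (t+1))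
noncomputable def psi (n : ℕ) : ℝ :=
  ∑ j ∈ Finset.range n, if n ∈ blk y j then cc (j+1) * n / Pk y (j+1) else 0

lemma Pk_lt (k : ℕ) : Pk y k < Pk y (k+1) := (PS_good y k).2.2.2.2

lemma Pk_mono : StrictMono (Pk y) := strictMono_nat_of_lt_succ (Pk_lt y)

lemma Pk_ge (k : ℕ) : k + 1 ≤ Pk y k := by
  induction k with
  | zero => simp [Pk, PS]
  | succ k ih => have := Pk_lt y k; omega

lemma blk_bounds {j n : ℕ} (h : n ∈ blk y j) : Pk y j < n ∧ n ≤ Pk y (j+1) := by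
  obtain ⟨t, ht, rfl⟩ := Finset.mem_image.1 h
  exact ⟨(PS_good y j).2.2.2.1 t ht, Nat.div_le_self _ _⟩

lemma blk_disj {j j' n : ℕ} (h : n ∈ blk y j) (h' : n ∈ blk y j') : j = j' := by
  by_contra hne
  rcases Nat.lt_or_ge j j' with hlt | hge
  · have h1 := (blk_bounds y h).2
    have h2 := (blk_bounds y h').1
    have := Pk_mono y |>.monotone (show j+1 ≤ j' by omega)
    omega
  · have hlt : j' < j := by omega
    have h1 := (blk_bounds y h').2
    have h2 := (blk_bounds y h).1
    have := Pk_mono y |>.monotone (show j'+1 ≤ j by omega)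
    omega

lemma psi_nonneg (n : ℕ) : 0 ≤ psi y n := by
  apply Finset.sum_nonneg
  intro j _
  split
  · have h1 := cc_pos (j+1); positivity
  · exact le_refl 0

lemma psi_eq_on_blk {j n : ℕ} (h : n ∈ blk y j) :
    psi y n = cc (j+1) * n / Pk y (j+1) := by
  have hjn : j < n := by
    have := (blk_bounds y h).1
    have := Pk_ge y j
    omega
  have := Finset.sum_eq_single_of_mem (s := Finset.range n)
    (f := fun j' => if n ∈ blk y j' then cc (j'+1) * n / Pk y (j'+1) else 0)
    j (Finset.mem_range.2 hjn) (by
      intro j' _ hne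
      rw [if_neg]
      intro h'
      exact hne (blk_disj y h' h))
  rw [psi, this, if_pos h]

lemma psi_supp {n : ℕ} (h : psi y n ≠ 0) : ∃ j, n ∈ blk y j := by
  by_contra hc
  push_neg at hc
  apply h
  apply Finset.sum_eq_zero
  intro j _
  exact if_neg (hc j)

lemma mass_ge_one (j : ℕ) : (1:ℝ) ≤ ∑ n ∈ blk y j, psi y n := by
  have hP : 0 < Pk y (j+1) := by have := Pk_ge y (j+1); omega
  have hinj : Set.InjOn (fun t => Pk y (j+1) / (t+1)) (Sk y (j+1)) := by
    intro t ht t' ht' hee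
    simp only at hee
    have hd := (PS_good y j).2.2.1 t ht
    have hd' := (PS_good y j).2.2.1 t' ht'
    have e1 : (t+1) * (Pk y (j+1) / (t+1)) = Pk y (j+1) := Nat.mul_div_cancel' hd
    have e2 : (t'+1) * (Pk y (j+1) / (t'+1)) = Pk y (j+1) := Nat.mul_div_cancel' hd'
    rw [hee] at e1
    have hq : 0 < Pk y (j+1) / (t'+1) := by
      rcases Nat.eq_zero_or_pos (Pk y (j+1) / (t'+1)) with h0 | h0
      · rw [h0, Nat.mul_zero] at e2; omega
      · exact h0
    have : t + 1 = t' + 1 := Nat.eq_of_mul_eq_mul_right hq (e1.trans e2.symm)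
    omega
  have hsum : ∑ n ∈ blk y j, psi y n
      = ∑ t ∈ Sk y (j+1), cc (j+1) * (Pk y (j+1) / (t+1) : ℕ) / Pk y (j+1) := by
    rw [blk, Finset.sum_image (fun a ha b hb => hinj ha hb)]
    apply Finset.sum_congr rfl
    intro t ht
    exact psi_eq_on_blk y (Finset.mem_image_of_mem _ ht)
  rw [hsum]
  have hterm : ∀ t ∈ Sk y (j+1),
      cc (j+1) * ((Pk y (j+1) / (t+1) : ℕ):ℝ) / Pk y (j+1) = cc (j+1) * (1/(t+1)) := by
    intro t ht
    have hd : (t+1) ∣ Pk y (j+1) := (PS_good y j).2.2.1 t ht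
    rw [Nat.cast_div hd (by positivity)]
    have hPne : ((Pk y (j+1):ℝ)) ≠ 0 := by positivity
    push_cast
    field_simp
  rw [Finset.sum_congr rfl hterm, ← Finset.mul_sum]
  have hS := (PS_good y j).2.1
  have h1 : cc (j+1) * (8 * 2^(j+1)) = 1 := by
    unfold cc
    have : ((1:ℝ)/2)^(j+1) * 2^(j+1) = 1 := by
      rw [← mul_pow]; norm_num
    field_simp
    nlinarith [this]
  calc (1:ℝ) = cc (j+1) * (8 * 2^(j+1)) := h1.symm
    _ ≤ cc (j+1) * ∑ t ∈ Sk y (j+1), (1:ℝ)/(t+1) := by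
        apply mul_le_mul_of_nonneg_left hS (cc_pos _).le

variable (y : ℕ → ℝ)

lemma not_summable_psi : ¬ Summable (psi y) := by
  intro hs
  obtain ⟨m, hm⟩ := exists_nat_gt (∑' n, psi y n)
  have hdisj : (↑(Finset.range m) : Set ℕ).PairwiseDisjoint (blk y) := by
    intro j _ j' _ hne
    simp only [Function.onFun]
    rw [Finset.disjoint_left]
    intro n hn hn'
    exact hne (blk_disj y hn hn')
  have hsum : ∑ n ∈ (Finset.range m).biUnion (blk y), psi y n
      = ∑ j ∈ Finset.range m, ∑ n ∈ blk y j, psi y n := Finset.sum_biUnion hdisj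
  have h1 : (m:ℝ) ≤ ∑ n ∈ (Finset.range m).biUnion (blk y), psi y n := by
    rw [hsum]
    calc (m:ℝ) = ∑ _j ∈ Finset.range m, (1:ℝ) := by simp
      _ ≤ _ := Finset.sum_le_sum (fun j _ => mass_ge_one y j)
  have h2 := Summable.sum_le_tsum ((Finset.range m).biUnion (blk y))
    (fun n _ => psi_nonneg y n) hs
  linarith

lemma hit_lemma (j i : ℕ) (hi1 : 1 ≤ i) (hij : i ≤ j+1) (x : ℝ) (n : ℕ)
    (hn : n ∈ blk y j) (hhit : nint ((n:ℝ) * x + y i) < psi y n) :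
    nint ((Pk y (j+1) : ℝ) * x + y i) ≤ 2 * cc (j+1) := by
  obtain ⟨t, ht, rfl⟩ := Finset.mem_image.1 hn
  set P := Pk y (j+1) with hPdef
  set q := P / (t+1) with hqdef
  have hd : (t+1) ∣ P := (PS_good y j).2.2.1 t ht
  have hPq : (t+1) * q = P := Nat.mul_div_cancel' hd
  have hPpos : 0 < P := by have := Pk_ge y (j+1); omega
  have hqpos : 0 < q := by
    rcases Nat.eq_zero_or_pos q with h0 | h0
    · rw [h0, Nat.mul_zero] at hPq; omega
    · exact h0
  have hψ : psi y q = cc (j+1) * q / P := psi_eq_on_blk y hn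
  rw [hψ] at hhit
  -- multiply by (t+1)
  have hcast : ((t+1:ℕ):ℝ) * (q:ℝ) = (P:ℝ) := by exact_mod_cast hPq
  have hrw : ((t+1:ℕ):ℝ) * ((q:ℝ) * x + y i) = (P:ℝ) * x + ((t+1:ℕ):ℝ) * y i := by
    rw [mul_add, ← mul_assoc, hcast]
  have step1 : nint ((P:ℝ) * x + ((t+1:ℕ):ℝ) * y i) < cc (j+1) := by
    calc nint ((P:ℝ) * x + ((t+1:ℕ):ℝ) * y i)
        = nint (((t+1:ℕ):ℝ) * ((q:ℝ) * x + y i)) := by rw [hrw]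
      _ ≤ ((t+1:ℕ):ℝ) * nint ((q:ℝ) * x + y i) := nint_nat_mul_le _ _
      _ < ((t+1:ℕ):ℝ) * (cc (j+1) * q / P) := by
          apply mul_lt_mul_of_pos_left hhit
          push_cast; linarith [Nat.cast_nonneg (α := ℝ) t]
      _ = cc (j+1) * (((t+1:ℕ):ℝ) * q / P) := by ring
      _ = cc (j+1) := by
          rw [hcast, div_self (by positivity : (P:ℝ) ≠ 0), mul_one]
  have step2 : nint ((t:ℝ) * y i) ≤ cc (j+1) := (PS_good y j).1 t ht i hi1 hij
  have hrw2 : (P:ℝ) * x + y i = ((P:ℝ) * x + ((t+1:ℕ):ℝ) * y i) - (t:ℝ) * y i := by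
    push_cast; ring
  calc nint ((P:ℝ) * x + y i)
      = nint (((P:ℝ) * x + ((t+1:ℕ):ℝ) * y i) - (t:ℝ) * y i) := by rw [hrw2]
    _ ≤ nint ((P:ℝ) * x + ((t+1:ℕ):ℝ) * y i) + nint ((t:ℝ) * y i) := nint_sub_le _ _
    _ ≤ 2 * cc (j+1) := by linarith

lemma meas_V (P : ℕ) (hP : 1 ≤ P) (z : ℝ) (c : ℝ) (hc : 0 < c) (hc1 : c ≤ 1) (m : ℤ) :
    volume ({x : ℝ | nint ((P:ℝ) * x + z) ≤ c} ∩ Icc (m:ℝ) (m+1))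
      ≤ ENNReal.ofReal (12 * c) := by
  have hPR : (0:ℝ) < P := by exact_mod_cast hP
  set w : ℝ := (P:ℝ) * m + z with hw
  set J : Finset ℤ := Finset.Icc (⌈w⌉ - 2) (⌈w⌉ + P + 2) with hJ
  have hsub : {x : ℝ | nint ((P:ℝ) * x + z) ≤ c} ∩ Icc (m:ℝ) (m+1)
      ⊆ ⋃ j ∈ J, Metric.closedBall (((j:ℝ) - z)/P) (c/P) := by
    rintro x ⟨hx1, hx2⟩
    set j : ℤ := round ((P:ℝ) * x + z) with hj
    have hnj : |(P:ℝ) * x + z - j| ≤ c := hx1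
    have hx2' := hx2
    obtain ⟨hxl, hxr⟩ := hx2'
    have hPx : w ≤ (P:ℝ) * x + z ∧ (P:ℝ) * x + z ≤ w + P := by
      constructor <;> [skip; skip] <;> rw [hw] <;> nlinarith
    have habs := abs_le.1 hnj
    have hjmem : j ∈ J := by
      rw [hJ, Finset.mem_Icc]
      constructor
      · have h1 : (⌈w⌉:ℝ) < w + 1 := Int.ceil_lt_add_one w
        have : ((⌈w⌉ - 2 : ℤ):ℝ) ≤ (j:ℝ) := by push_cast; nlinarith [hPx.1]
        exact_mod_cast this
      · have h2 : w ≤ (⌈w⌉:ℝ) := Int.le_ceil w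
        have : (j:ℝ) ≤ ((⌈w⌉ + P + 2 : ℤ):ℝ) := by push_cast; nlinarith [hPx.2]
        exact_mod_cast this
    apply mem_biUnion hjmem
    rw [Metric.mem_closedBall, Real.dist_eq]
    have heq : x - ((j:ℝ) - z)/P = ((P:ℝ) * x + z - j)/P := by field_simp; ring
    rw [heq, abs_div, abs_of_pos hPR]
    gcongr
  calc volume ({x : ℝ | nint ((P:ℝ) * x + z) ≤ c} ∩ Icc (m:ℝ) (m+1))
      ≤ volume (⋃ j ∈ J, Metric.closedBall (((j:ℝ) - z)/P) (c/P)) := measure_mono hsub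
    _ ≤ ∑ j ∈ J, volume (Metric.closedBall (((j:ℝ) - z)/P) (c/P)) :=
        measure_biUnion_finset_le J _
    _ = ∑ _j ∈ J, ENNReal.ofReal (2 * (c/P)) := by
        apply Finset.sum_congr rfl
        intro j _
        rw [Real.volume_closedBall]
    _ = (J.card : ℝ≥0∞) * ENNReal.ofReal (2 * (c/P)) := by
        rw [Finset.sum_const, nsmul_eq_mul]
    _ ≤ ENNReal.ofReal (12 * c) := by
        have hcard : J.card = P + 5 := by
          rw [hJ, Int.card_Icc]
          have : ⌈w⌉ + P + 2 + 1 - (⌈w⌉ - 2) = (P:ℤ) + 5 := by ring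
          rw [this]
          omega
        rw [hcard, show ((P + 5 : ℕ) : ℝ≥0∞) = ENNReal.ofReal ((P + 5 : ℕ):ℝ) from
          (ENNReal.ofReal_natCast _).symm, ← ENNReal.ofReal_mul (by positivity)]
        apply ENNReal.ofReal_le_ofReal
        push_cast
        have h2 : ((P:ℝ) + 5) * (2 * (c/P)) = 2*c*((P:ℝ)+5)/P := by ring
        rw [h2, div_le_iff₀ hPR]
        nlinarith [mul_nonneg hc.le (sub_nonneg.2 (show (1:ℝ) ≤ P from by exact_mod_cast hP))]


theorem stmt0 (y : ℕ → ℝ) :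
    ∃ ψ : ℕ → ℝ,
      (∀ n, 0 ≤ ψ n) ∧
      ¬ Summable (fun n : ℕ => ψ n) ∧
      ∀ i : ℕ, 1 ≤ i →
        volume {x : ℝ |
          {n : ℕ | 1 ≤ n ∧ nint ((n : ℝ) * x + y i) < ψ n}.Infinite} = 0 := by
  refine ⟨psi y, psi_nonneg y, not_summable_psi y, ?_⟩
  intro i hi
  set W : Set ℝ := {x : ℝ |
      {n : ℕ | 1 ≤ n ∧ nint ((n : ℝ) * x + y i) < psi y n}.Infinite} with hW
  have key : ∀ m : ℤ, volume (W ∩ Icc (m:ℝ) (m+1)) = 0 := by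
    intro m
    set μ := volume.restrict (Icc (m:ℝ) (m+1)) with hμ
    set V : ℕ → Set ℝ :=
      fun j => {x | nint ((Pk y (j+1):ℝ) * x + y i) ≤ 2 * cc (j+1)} with hV
    have hccb : ∀ j : ℕ, 2 * cc (j+1) ≤ 1 := by
      intro j
      have h1 : ((1:ℝ)/2)^(j+1) ≤ 1 := pow_le_one₀ (by norm_num) (by norm_num)
      unfold cc
      linarith
    have hμV : ∀ j, μ (V j) ≤ ENNReal.ofReal (12 * (2 * cc (j+1))) := by
      intro j
      rw [hμ, Measure.restrict_apply' measurableSet_Icc]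
      exact meas_V (Pk y (j+1)) (by have := Pk_ge y (j+1); omega) (y i)
        (2 * cc (j+1)) (by have := cc_pos (j+1); linarith) (hccb j) m
    have hsummable : Summable (fun j : ℕ => 12 * (2 * cc (j+1))) := by
      have hgeo : Summable (fun j : ℕ => ((1:ℝ)/2)^j) :=
        summable_geometric_of_lt_one (by norm_num) (by norm_num)
      have := (hgeo.mul_left (12 * (2 * ((1:ℝ)/2) / 8)))
      apply this.congr
      intro j
      unfold cc
      rw [pow_succ]
      ring
    have hsum : ∑' j, μ (V j) ≠ ⊤ := by
      apply ne_top_of_le_ne_top (b := ENNReal.ofReal (∑' j, 12 * (2 * cc (j+1))))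
        ENNReal.ofReal_ne_top
      calc ∑' j, μ (V j) ≤ ∑' j, ENNReal.ofReal (12 * (2 * cc (j+1))) :=
            ENNReal.tsum_le_tsum hμV
        _ = ENNReal.ofReal (∑' j, 12 * (2 * cc (j+1))) := by
            rw [ENNReal.ofReal_tsum_of_nonneg
              (fun j => by have := cc_pos (j+1); positivity) hsummable]
    have hBC : μ {x | ∃ᶠ j in atTop,
        nint ((Pk y (j+1):ℝ) * x + y i) ≤ 2 * cc (j+1)} = 0 :=
      measure_setOf_frequently_eq_zero (by exact hsum)
    have hWsub : W ⊆ {x | ∃ᶠ j in atTop,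
        nint ((Pk y (j+1):ℝ) * x + y i) ≤ 2 * cc (j+1)} := by
      intro x hx
      have hinf : {n : ℕ | 1 ≤ n ∧ nint ((n : ℝ) * x + y i) < psi y n}.Infinite := hx
      rw [mem_setOf_eq, frequently_atTop]
      intro K
      set K' := max K i with hK'
      have hex : ∃ n ∈ {n : ℕ | 1 ≤ n ∧ nint ((n : ℝ) * x + y i) < psi y n},
          Pk y (K'+1) < n := by
        by_contra hcon
        push_neg at hcon
        exact hinf (Set.Finite.subset (Set.finite_le_nat (Pk y (K'+1)))
          (fun n hn => hcon n hn))
      obtain ⟨n, hnmem, hngt⟩ := hex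
      obtain ⟨hn1, hnhit⟩ := hnmem
      have hψpos : 0 < psi y n := lt_of_le_of_lt (nint_nonneg _) hnhit
      obtain ⟨j, hj⟩ := psi_supp y (ne_of_gt hψpos)
      have hjK : K' ≤ j := by
        by_contra hcon
        push_neg at hcon
        have h1 := (blk_bounds y hj).2
        have h2 := (Pk_mono y).monotone (show j+1 ≤ K'+1 by omega)
        omega
      refine ⟨j, le_trans (le_max_left _ _) hjK, ?_⟩
      exact hit_lemma y j i hi (by omega) x n hj hnhit
    have hfin : μ W = 0 := measure_mono_null hWsub hBC
    rw [hμ, Measure.restrict_apply' measurableSet_Icc] at hfin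
    exact hfin
  have hcover : W ⊆ ⋃ m : ℤ, (W ∩ Icc (m:ℝ) (m+1)) := by
    intro x hx
    refine mem_iUnion.2 ⟨⌊x⌋, hx, Int.floor_le x, ?_⟩
    linarith [Int.lt_floor_add_one x]
  exact measure_mono_null hcover (measure_iUnion_null (fun m => key m))
end

section
/- There exist an uncountable set C ⊆ ℝ and an approximating function ψ : ℕ → [0,∞) such that the series ∑_{n≥1} ψ(n) diverges and such that for every y ∈ C the set of real numbers x for which the inequality ‖n·x + y‖ < ψ(n) holds for infinitely many integers n ≥ 1 has Lebesgue measure zero. -/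
open MeasureTheory Filter Set

/-!
The function `ψ` lives on the disjoint blocks `{M_k / m : 1 ≤ m ≤ b_k}`, `M_k = b_k!`, where
`ψ (M_k / m) = δ_k / m`; each block contributes the harmonic sum `δ_k H(b_k) ≥ 1`, so `∑ ψ`
diverges. The set `C` of all `y` with `‖Q_k y‖ ≤ θ_k` for every `k` contains the uncountably many
sums `∑_{k ∈ s} 1 / Q_{k+1}`, `s ⊆ ℕ`, because `Q_k ∣ Q_{k+1}` and `Q_k` grows fast. For `y ∈ C`
and `n = M_k / m`, the identity `Q_k M_k x = Q_k m (n x + y) - m (Q_k y)` shows that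
`‖n x + y‖ < δ_k / m` forces `‖Q_k M_k x‖ ≤ Q_k δ_k + b_k θ_k = 2⁻ᵏ`. In `[0, 1)` these sets
have measure `O(2⁻ᵏ)`, so Borel–Cantelli and `1`-periodicity in `x` finish the proof.
-/

open Function

lemma nint_le_abs_sub_intCast (t : ℝ) (z : ℤ) : nint t ≤ |t - z| := round_le t z

lemma nint_add_intCast (t : ℝ) (z : ℤ) : nint (t + z) = nint t := by
  simp only [nint, round_add_intCast, Int.cast_add, add_sub_add_right_eq_sub]

lemma exists_int_abs_mul_sub_le (q n m : ℕ) (x y : ℝ) :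
    ∃ t : ℤ, |((q * (n * m) : ℕ) : ℝ) * x - t| ≤ q * m * nint (n * x + y) + m * nint (q * y) := by
  refine ⟨q * m * round (n * x + y) - m * round (q * y), ?_⟩
  have h : ((q * (n * m) : ℕ) : ℝ) * x - ((q * m * round (n * x + y) - m * round (q * y) : ℤ) : ℝ)
      = q * m * (n * x + y - round (n * x + y)) - m * (q * y - round (q * y)) := by
    push_cast
    ring
  rw [h]
  refine (abs_sub _ _).trans (le_of_eq ?_)
  simp only [nint, abs_mul, Nat.abs_cast]

section Lacunary

variable {w : ℕ → ℝ}

lemma le_mul_quarter_pow (hw : ∀ k, 4 * w (k + 1) ≤ w k) (i j : ℕ) :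
    w (i + j) ≤ w j * (1 / 4) ^ i := by
  induction i with
  | zero => simp
  | succ i ih =>
    have := hw (i + j)
    rw [add_right_comm, pow_succ, ← mul_assoc]
    linarith

lemma summable_of_four_mul_succ_le (hw0 : ∀ k, 0 ≤ w k) (hw : ∀ k, 4 * w (k + 1) ≤ w k) :
    Summable w :=
  .of_nonneg_of_le hw0 (fun k => le_mul_quarter_pow hw k 0)
    ((summable_geometric_of_lt_one (r := 1 / 4) (by norm_num) (by norm_num)).mul_left (w 0))

lemma tsum_indicator_nat_add_le (hw0 : ∀ k, 0 ≤ w k) (hw : ∀ k, 4 * w (k + 1) ≤ w k)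
    (s : Set ℕ) (j : ℕ) : ∑' i, s.indicator w (i + j) ≤ 4 / 3 * w j := by
  have hle : ∀ i, s.indicator w (i + j) ≤ w j * (1 / 4) ^ i := fun i =>
    (indicator_le_self' fun k _ => hw0 k) (i + j) |>.trans (le_mul_quarter_pow hw i j)
  have hgeom : Summable fun i : ℕ => w j * (1 / 4 : ℝ) ^ i :=
    (summable_geometric_of_lt_one (by norm_num) (by norm_num)).mul_left _
  calc ∑' i, s.indicator w (i + j)
      ≤ ∑' i : ℕ, w j * (1 / 4) ^ i :=
        Summable.tsum_le_tsum hle (.of_nonneg_of_le (fun i => indicator_nonneg (fun k _ => hw0 k) _)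
          hle hgeom) hgeom
    _ = 4 / 3 * w j := by
        rw [tsum_mul_left, tsum_geometric_of_lt_one (by norm_num) (by norm_num)]
        ring

lemma tsum_indicator_lt_of_mem_of_notMem (hw0 : ∀ k, 0 < w k) (hw : ∀ k, 4 * w (k + 1) ≤ w k)
    {s t : Set ℕ} {j : ℕ} (hlt : ∀ i < j, (i ∈ s ↔ i ∈ t)) (hs : j ∈ s) (ht : j ∉ t) :
    ∑' k, t.indicator w k < ∑' k, s.indicator w k := by
  have hw0' : ∀ k, 0 ≤ w k := fun k => (hw0 k).le
  have hsum := summable_of_four_mul_succ_le hw0' hw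
  have hhead : ∑ i ∈ Finset.range j, s.indicator w i = ∑ i ∈ Finset.range j, t.indicator w i :=
    Finset.sum_congr rfl fun i hi => by
      have hst := hlt i (Finset.mem_range.1 hi)
      by_cases h : i ∈ s
      · rw [indicator_of_mem h, indicator_of_mem (hst.1 h)]
      · rw [indicator_of_notMem h, indicator_of_notMem (mt hst.2 h)]
  rw [← (hsum.indicator s).sum_add_tsum_nat_add (j + 1),
    ← (hsum.indicator t).sum_add_tsum_nat_add (j + 1), Finset.sum_range_succ,
    Finset.sum_range_succ, hhead, indicator_of_mem hs, indicator_of_notMem ht]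
  have htail_s : 0 ≤ ∑' i, s.indicator w (i + (j + 1)) :=
    tsum_nonneg fun i => indicator_nonneg (fun k _ => hw0' k) _
  have htail_t := tsum_indicator_nat_add_le hw0' hw t (j + 1)
  linarith [hw j, hw0 j]

lemma injective_tsum_indicator (hw0 : ∀ k, 0 < w k) (hw : ∀ k, 4 * w (k + 1) ≤ w k) :
    Injective fun s : Set ℕ => ∑' k, s.indicator w k := by
  classical
  intro s t hst
  by_contra hne
  have hex : ∃ j, ¬(j ∈ s ↔ j ∈ t) := by simpa [Set.ext_iff] using hne
  have hmin : ∀ i < Nat.find hex, (i ∈ s ↔ i ∈ t) := fun i hi => not_not.1 (Nat.find_min hex hi)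
  by_cases hs : Nat.find hex ∈ s
  · have ht : Nat.find hex ∉ t := fun ht => Nat.find_spec hex (iff_of_true hs ht)
    exact (tsum_indicator_lt_of_mem_of_notMem hw0 hw hmin hs ht).ne' hst
  · have ht : Nat.find hex ∈ t := by_contra fun ht => Nat.find_spec hex (iff_of_false hs ht)
    exact (tsum_indicator_lt_of_mem_of_notMem hw0 hw (fun i hi => (hmin i hi).symm) ht hs).ne hst

end Lacunary

def approxSet (N : ℕ) (ε : ℝ) : Set ℝ := {x ∈ Ico 0 1 | ∃ t : ℤ, |N * x - t| ≤ ε}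

lemma volume_approxSet_le {N : ℕ} (hN : 0 < N) {ε : ℝ} (hε0 : 0 ≤ ε) (hε1 : ε ≤ 1) :
    volume (approxSet N ε) ≤ ENNReal.ofReal (8 * ε) := by
  have hN' : (0 : ℝ) < N := Nat.cast_pos.2 hN
  have hsub : approxSet N ε ⊆
      ⋃ t ∈ Finset.Icc (-1 : ℤ) (N + 1), Metric.closedBall ((t : ℝ) / N) (ε / N) := by
    rintro x ⟨⟨hx0, hx1⟩, t, ht⟩
    have ht' := abs_le.1 ht
    have hNx : (N : ℝ) * x < N := by nlinarith
    have hlo : ((-1 : ℤ) : ℝ) ≤ t := by push_cast; nlinarith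
    have hhi : (t : ℝ) ≤ ((N + 1 : ℤ) : ℝ) := by push_cast; linarith
    refine mem_biUnion (Finset.mem_Icc.2 ⟨Int.cast_le.1 hlo, Int.cast_le.1 hhi⟩) ?_
    rw [Metric.mem_closedBall, Real.dist_eq, sub_div' hN'.ne', abs_div, abs_of_pos hN',
      mul_comm]
    exact div_le_div_of_nonneg_right ht hN'.le
  calc volume (approxSet N ε)
      ≤ ∑ t ∈ Finset.Icc (-1 : ℤ) (N + 1), volume (Metric.closedBall ((t : ℝ) / N) (ε / N)) :=
        (measure_mono hsub).trans (measure_biUnion_finset_le _ _)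
    _ = (N + 3 : ℕ) * ENNReal.ofReal (2 * (ε / N)) := by
        simp only [Real.volume_closedBall, Finset.sum_const, Int.card_Icc, nsmul_eq_mul]
        congr
    _ ≤ ENNReal.ofReal (8 * ε) := by
        rw [← ENNReal.ofReal_natCast, ← ENNReal.ofReal_mul (by positivity)]
        refine ENNReal.ofReal_le_ofReal ?_
        have hN1 : (1 : ℝ) ≤ N := Nat.one_le_cast.2 hN
        rw [mul_div_assoc', mul_div_assoc', div_le_iff₀ hN']
        push_cast
        nlinarith

lemma not_summable_of_one_le_sum_blocks {α : Type*} {f : α → ℝ} (hf : ∀ a, 0 ≤ f a)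
    {S : ℕ → Finset α} (hS : Pairwise (Disjoint on S)) (h : ∀ k, 1 ≤ ∑ a ∈ S k, f a) :
    ¬ Summable f := by
  classical
  intro hsum
  obtain ⟨K, hK⟩ := exists_nat_gt (∑' a, f a)
  have hblocks : (K : ℝ) ≤ ∑ a ∈ (Finset.range K).biUnion S, f a := by
    rw [Finset.sum_biUnion (hS.set_pairwise _)]
    simpa using Finset.sum_le_sum fun k (_ : k ∈ Finset.range K) => h k
  linarith [hsum.sum_le_tsum ((Finset.range K).biUnion S) fun a _ => hf a]

def badSet (ψ : ℕ → ℝ) (y : ℝ) : Set ℝ :=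
  {x | {n : ℕ | 1 ≤ n ∧ nint ((n : ℝ) * x + y) < ψ n}.Infinite}

lemma add_intCast_mem_badSet {ψ : ℕ → ℝ} {x y : ℝ} (hx : x ∈ badSet ψ y) (j : ℤ) :
    x + j ∈ badSet ψ y := by
  have hshift : ∀ n : ℕ, (n : ℝ) * (x + j) + y = (n * x + y) + ((n * j : ℤ) : ℝ) := fun n => by
    push_cast
    ring
  simpa only [badSet, mem_ofPred_eq, hshift, nint_add_intCast] using hx

lemma volume_eq_zero_of_fract_mem {s : Set ℝ} (hs : ∀ x ∈ s, Int.fract x ∈ s)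
    (h : volume (s ∩ Ico 0 1) = 0) : volume s = 0 := by
  refine measure_mono_null (show s ⊆ Int.fract ⁻¹' s from hs) ?_
  rw [Int.preimage_fract, measure_iUnion_null_iff]
  intro m
  simpa only [sub_eq_add_neg, measure_preimage_add_right] using h

lemma volume_badSet_eq_zero {ψ : ℕ → ℝ} {y : ℝ} (h : volume (badSet ψ y ∩ Ico 0 1) = 0) :
    volume (badSet ψ y) = 0 :=
  volume_eq_zero_of_fract_mem (fun x hx => by
    simpa [Int.fract, sub_eq_add_neg] using add_intCast_mem_badSet hx (-⌊x⌋)) h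

namespace InhomogeneousKhintchine

open scoped Nat

def Q : ℕ → ℕ
  | 0 => 1
  | k + 1 => Q k * (4 * 2 ^ k * 2 ^ (4 * 2 ^ k * Q k))

def b (k : ℕ) : ℕ := 2 ^ (4 * 2 ^ k * Q k)

def M (k : ℕ) : ℕ := (b k)!

noncomputable def δ (k : ℕ) : ℝ := (1 / 2) ^ (k + 1) / Q k

noncomputable def θ (k : ℕ) : ℝ := (1 / 2) ^ (k + 1) / b k

lemma Q_succ (k : ℕ) : Q (k + 1) = Q k * (4 * 2 ^ k * b k) := rfl

lemma Q_pos (k : ℕ) : 0 < Q k := by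
  induction k with
  | zero => exact Nat.one_pos
  | succ k ih => exact Nat.mul_pos ih (by positivity)

lemma two_le_b (k : ℕ) : 2 ≤ b k :=
  Nat.le_self_pow (by have := Q_pos k; positivity) 2

lemma four_mul_Q_le (k : ℕ) : 4 * Q k ≤ Q (k + 1) := by
  have h : 4 ≤ 4 * 2 ^ k * b k := by nlinarith [Nat.one_le_two_pow (n := k), two_le_b k]
  rw [Q_succ, mul_comm 4]
  exact Nat.mul_le_mul_left _ h

lemma Q_dvd_Q {i j : ℕ} (h : i ≤ j) : Q i ∣ Q j := by
  induction j, h using Nat.le_induction with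
  | base => exact dvd_rfl
  | succ j _ ih => exact ih.trans ⟨_, Q_succ j⟩

lemma Q_mono : Monotone Q :=
  monotone_nat_of_le_succ fun k => by linarith [four_mul_Q_le k]

lemma b_add_two_le (k : ℕ) : b k + 2 ≤ b (k + 1) := by
  have hexp : 4 * 2 ^ k * Q k + 1 ≤ 4 * 2 ^ (k + 1) * Q (k + 1) := by
    have := Q_mono k.le_succ
    have := Q_pos k
    rw [pow_succ]
    nlinarith [Nat.one_le_two_pow (n := k)]
  have h2 : b k * 2 ≤ b (k + 1) := by
    rw [b, ← pow_succ]
    exact Nat.pow_le_pow_right two_pos hexp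
  linarith [two_le_b k]

lemma b_mono : Monotone b :=
  monotone_nat_of_le_succ fun k => by linarith [b_add_two_le k]

lemma M_lt_factorial_pred {k k' : ℕ} (h : k < k') : M k < (b k' - 1)! := by
  obtain ⟨j, hkj, rfl⟩ : ∃ j, k ≤ j ∧ k' = j + 1 := ⟨k' - 1, by omega, by omega⟩
  calc M k ≤ (b j)! := Nat.factorial_le (b_mono hkj)
    _ < (b j + 1)! := (Nat.factorial_lt (by linarith [two_le_b j])).2 (by omega)
    _ ≤ (b (j + 1) - 1)! := Nat.factorial_le (by have := b_add_two_le j; omega)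

def block (k : ℕ) : Finset ℕ := (Finset.Icc 1 (b k)).image (M k / ·)

noncomputable def ψ (n : ℕ) : ℝ := ∑' k, if n ∈ block k then δ k / (M k / n : ℕ) else 0

lemma dvd_M {k m : ℕ} (hm : m ∈ Finset.Icc 1 (b k)) : m ∣ M k :=
  Nat.dvd_factorial (Finset.mem_Icc.1 hm).1 (Finset.mem_Icc.1 hm).2

lemma M_div_M_div {k m : ℕ} (hm : m ∈ Finset.Icc 1 (b k)) : M k / (M k / m) = m :=
  Nat.div_div_self (dvd_M hm) (Nat.factorial_ne_zero _)

lemma mem_block_iff {k n : ℕ} : n ∈ block k ↔ ∃ m ∈ Finset.Icc 1 (b k), n * m = M k := by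
  simp only [block, Finset.mem_image]
  constructor
  · rintro ⟨m, hm, rfl⟩
    exact ⟨m, hm, Nat.div_mul_cancel (dvd_M hm)⟩
  · rintro ⟨m, hm, hnm⟩
    exact ⟨m, hm, by rw [← hnm, Nat.mul_div_cancel _ (Finset.mem_Icc.1 hm).1]⟩

lemma le_M_of_mem_block {k n : ℕ} (hn : n ∈ block k) : n ≤ M k := by
  obtain ⟨m, hm, hnm⟩ := mem_block_iff.1 hn
  exact hnm ▸ Nat.le_mul_of_pos_right n (Finset.mem_Icc.1 hm).1

lemma factorial_pred_le_of_mem_block {k n : ℕ} (hn : n ∈ block k) : (b k - 1)! ≤ n := by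
  obtain ⟨m, hm, hnm⟩ := mem_block_iff.1 hn
  have hb : (b k - 1)! * b k = M k := by
    rw [M, mul_comm, Nat.mul_factorial_pred (by linarith [two_le_b k])]
  refine Nat.le_of_mul_le_mul_right ?_ (by linarith [two_le_b k] : 0 < b k)
  rw [hb, ← hnm]
  exact Nat.mul_le_mul_left n (Finset.mem_Icc.1 hm).2

lemma M_strictMono : StrictMono M := fun _ _ h =>
  (M_lt_factorial_pred h).trans_le (Nat.factorial_le (Nat.sub_le _ _))

lemma block_pairwise_disjoint : Pairwise (Disjoint on block) := by
  have key : ∀ {k k'}, k < k' → Disjoint (block k) (block k') := fun h =>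
    Finset.disjoint_left.2 fun n hn hn' =>
      ((le_M_of_mem_block hn).trans_lt (M_lt_factorial_pred h)).not_ge
        (factorial_pred_le_of_mem_block hn')
  intro k k' hne
  rcases hne.lt_or_gt with h | h
  exacts [key h, (key h).symm]

lemma ψ_of_mem_block {k n : ℕ} (hn : n ∈ block k) : ψ n = δ k / (M k / n : ℕ) := by
  rw [ψ, tsum_eq_single k fun k' hk' => if_neg fun hn' =>
    Finset.disjoint_left.1 (block_pairwise_disjoint hk') hn' hn, if_pos hn]

lemma ψ_M_div {k m : ℕ} (hm : m ∈ Finset.Icc 1 (b k)) : ψ (M k / m) = δ k / m := by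
  rw [ψ_of_mem_block (Finset.mem_image_of_mem _ hm), M_div_M_div hm]

lemma exists_mem_block_of_ψ_ne_zero {n : ℕ} (h : ψ n ≠ 0) : ∃ k, n ∈ block k := by
  by_contra! hn
  exact h (by simp [ψ, hn])

lemma δ_pos (k : ℕ) : 0 < δ k := by
  have := Q_pos k
  unfold δ
  positivity

lemma ψ_nonneg (n : ℕ) : 0 ≤ ψ n :=
  tsum_nonneg fun k => by
    split_ifs
    · exact div_nonneg (δ_pos k).le (Nat.cast_nonneg _)
    · exact le_rfl

lemma two_pow_mul_Q_le_harmonic (k : ℕ) : (2 : ℝ) ^ (k + 1) * Q k ≤ harmonic (b k) := by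
  have hlog : Real.log (b k) = 2 * (2 ^ (k + 1) * Q k) * Real.log 2 := by
    rw [b, Nat.cast_pow, Real.log_pow]
    push_cast
    ring
  have hlog2 : 1 / 2 ≤ Real.log 2 := by linarith [Real.log_two_gt_d9]
  calc (2 : ℝ) ^ (k + 1) * Q k ≤ 2 * (2 ^ (k + 1) * Q k) * Real.log 2 := by
        nlinarith [show (0 : ℝ) ≤ 2 ^ (k + 1) * Q k by positivity]
    _ = Real.log (b k) := hlog.symm
    _ ≤ Real.log (b k + 1 : ℕ) :=
        Real.log_le_log (by exact_mod_cast (two_le_b k).trans' one_le_two) (by push_cast; linarith)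
    _ ≤ harmonic (b k) := log_add_one_le_harmonic _

lemma one_le_sum_block (k : ℕ) : 1 ≤ ∑ n ∈ block k, ψ n := by
  have hinj : Set.InjOn (M k / ·) (Finset.Icc 1 (b k) : Set ℕ) := fun m hm m' hm' h => by
    rw [← M_div_M_div hm, ← M_div_M_div hm']
    exact congrArg (M k / ·) h
  rw [block, Finset.sum_image hinj, Finset.sum_congr rfl fun m hm => ψ_M_div hm]
  calc (1 : ℝ) = δ k * (2 ^ (k + 1) * Q k) := by
        have := Q_pos k
        unfold δ
        field_simp
        rw [← mul_pow]
        norm_num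
    _ ≤ δ k * harmonic (b k) := by
        gcongr
        · exact (δ_pos k).le
        · exact two_pow_mul_Q_le_harmonic k
    _ = ∑ m ∈ Finset.Icc 1 (b k), δ k / m := by
        rw [harmonic_eq_sum_Icc, Rat.cast_sum, Finset.mul_sum]
        push_cast
        rfl

lemma not_summable_ψ : ¬ Summable ψ :=
  not_summable_of_one_le_sum_blocks ψ_nonneg block_pairwise_disjoint one_le_sum_block

def C : Set ℝ := {y | ∀ k, nint (Q k * y) ≤ θ k}

noncomputable def weight (k : ℕ) : ℝ := (Q (k + 1) : ℝ)⁻¹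

lemma weight_pos (k : ℕ) : 0 < weight k := inv_pos.2 (Nat.cast_pos.2 (Q_pos _))

lemma four_mul_weight_succ_le (k : ℕ) : 4 * weight (k + 1) ≤ weight k := by
  have hQ : (0 : ℝ) < Q (k + 1) := Nat.cast_pos.2 (Q_pos _)
  have hQ' : (0 : ℝ) < Q (k + 1 + 1) := Nat.cast_pos.2 (Q_pos _)
  rw [weight, weight, ← div_eq_mul_inv, div_le_iff₀ hQ', inv_mul_eq_div, le_div_iff₀ hQ]
  exact_mod_cast four_mul_Q_le (k + 1)

noncomputable def cantorMap (s : Set ℕ) : ℝ := ∑' k, s.indicator weight k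

lemma exists_int_Q_mul_sum_eq (s : Set ℕ) (j : ℕ) :
    ∃ z : ℤ, (Q j : ℝ) * ∑ i ∈ Finset.range j, s.indicator weight i = z := by
  classical
  refine ⟨(∑ i ∈ Finset.range j, if i ∈ s then Q j / Q (i + 1) else 0 : ℕ), ?_⟩
  rw [Int.cast_natCast, Nat.cast_sum, Finset.mul_sum]
  refine Finset.sum_congr rfl fun i hi => ?_
  have hdvd := Q_dvd_Q (Finset.mem_range.1 hi)
  have hQ : (Q (i + 1) : ℝ) ≠ 0 := Nat.cast_ne_zero.2 (Q_pos _).ne'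
  by_cases h : i ∈ s
  · rw [indicator_of_mem h, if_pos h, Nat.cast_div hdvd hQ, weight, div_eq_mul_inv]
  · rw [indicator_of_notMem h, if_neg h, mul_zero, Nat.cast_zero]

lemma cantorMap_mem_C (s : Set ℕ) : cantorMap s ∈ C := by
  intro j
  obtain ⟨z, hz⟩ := exists_int_Q_mul_sum_eq s j
  have hsplit := ((summable_of_four_mul_succ_le (fun k => (weight_pos k).le)
    four_mul_weight_succ_le).indicator s).sum_add_tsum_nat_add j
  set tail := ∑' i, s.indicator weight (i + j)
  have htail0 : 0 ≤ tail := tsum_nonneg fun i => indicator_nonneg (fun k _ => (weight_pos k).le) _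
  have htail := tsum_indicator_nat_add_le (fun k => (weight_pos k).le) four_mul_weight_succ_le s j
  have hQ : (0 : ℝ) < Q j := Nat.cast_pos.2 (Q_pos j)
  have hb : (0 : ℝ) < b j := Nat.cast_pos.2 (two_pos.trans_le (two_le_b j))
  calc nint (Q j * cantorMap s) = nint (Q j * tail + z) := by
        rw [cantorMap, ← hsplit, mul_add, hz, add_comm]
    _ ≤ |Q j * tail - ((0 : ℤ) : ℝ)| := by rw [nint_add_intCast]; exact nint_le_abs_sub_intCast _ 0
    _ ≤ Q j * (4 / 3 * weight j) := by
        rw [Int.cast_zero, sub_zero, abs_of_nonneg (by positivity)]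
        exact mul_le_mul_of_nonneg_left htail hQ.le
    _ ≤ θ j := by
        rw [weight, Q_succ, θ]
        push_cast
        field_simp
        rw [pow_succ, mul_assoc, ← mul_assoc (2 ^ j : ℝ), ← mul_pow]
        norm_num

lemma not_countable_C : ¬ C.Countable := fun hC => by
  have hinj : Injective cantorMap :=
    injective_tsum_indicator weight_pos four_mul_weight_succ_le
  have : Countable (Set ℕ) :=
    countable_univ_iff.1 ((hC.preimage hinj).mono fun s _ => cantorMap_mem_C s)
  obtain ⟨f, hf⟩ := Countable.exists_injective_nat (Set ℕ)
  exact cantor_injective f hf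

lemma exists_int_near_of_mem_block {x y : ℝ} (hy : y ∈ C) {k n : ℕ} (hn : n ∈ block k)
    (hx : nint (n * x + y) < ψ n) : ∃ t : ℤ, |((Q k * M k : ℕ) : ℝ) * x - t| ≤ (1 / 2) ^ k := by
  obtain ⟨m, hm, hnm⟩ := mem_block_iff.1 hn
  have hm0 : (0 : ℝ) < m := Nat.cast_pos.2 (Finset.mem_Icc.1 hm).1
  have hmb : (m : ℝ) ≤ b k := Nat.cast_le.2 (Finset.mem_Icc.1 hm).2
  have hψ : ψ n = δ k / m := by
    rw [← ψ_M_div hm, Nat.div_eq_of_eq_mul_left (Finset.mem_Icc.1 hm).1 hnm.symm]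
  obtain ⟨t, ht⟩ := exists_int_abs_mul_sub_le (Q k) n m x y
  refine ⟨t, ?_⟩
  rw [← hnm]
  refine ht.trans ?_
  have hQ : (0 : ℝ) < Q k := Nat.cast_pos.2 (Q_pos k)
  have hb : (0 : ℝ) < b k := Nat.cast_pos.2 (two_pos.trans_le (two_le_b k))
  have h1 : (Q k : ℝ) * m * nint (n * x + y) ≤ (1 / 2) ^ (k + 1) := by
    calc (Q k : ℝ) * m * nint (n * x + y) ≤ Q k * m * (δ k / m) := by
          rw [← hψ]; exact mul_le_mul_of_nonneg_left hx.le (by positivity)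
      _ = (1 / 2) ^ (k + 1) := by rw [δ]; field_simp
  have h2 : (m : ℝ) * nint (Q k * y) ≤ (1 / 2) ^ (k + 1) := by
    calc (m : ℝ) * nint (Q k * y) ≤ b k * θ k :=
          mul_le_mul hmb (hy k) (abs_nonneg _) hb.le
      _ = (1 / 2) ^ (k + 1) := by rw [θ]; field_simp
  calc _ ≤ (1 / 2 : ℝ) ^ (k + 1) + (1 / 2) ^ (k + 1) := add_le_add h1 h2
    _ = (1 / 2) ^ k := by ring

lemma frequently_mem_approxSet {x y : ℝ} (hy : y ∈ C) (hx : x ∈ badSet ψ y ∩ Ico 0 1) :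
    ∃ᶠ k in atTop, x ∈ approxSet (Q k * M k) ((1 / 2) ^ k) := by
  refine frequently_atTop.2 fun K => ?_
  obtain ⟨n, ⟨-, hn⟩, hnK⟩ := (hx.1.sdiff (finite_Iic (M K))).nonempty
  obtain ⟨k, hk⟩ := exists_mem_block_of_ψ_ne_zero ((abs_nonneg _).trans_lt hn).ne'
  refine ⟨k, ?_, hx.2, exists_int_near_of_mem_block hy hk hn⟩
  by_contra! hkK
  exact hnK ((le_M_of_mem_block hk).trans (M_strictMono.monotone hkK.le))

lemma volume_badSet_inter_Ico_eq_zero {y : ℝ} (hy : y ∈ C) :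
    volume (badSet ψ y ∩ Ico 0 1) = 0 := by
  refine measure_mono_null (fun x hx => frequently_mem_approxSet hy hx)
    (measure_setOfPred_frequently_eq_zero ?_)
  have hsum : Summable fun k : ℕ => 8 * (1 / 2 : ℝ) ^ k :=
    (summable_geometric_of_lt_one (by norm_num) (by norm_num)).mul_left 8
  refine ne_top_of_le_ne_top ?_ (ENNReal.tsum_le_tsum fun k =>
    volume_approxSet_le (Nat.mul_pos (Q_pos k) (Nat.factorial_pos _)) (by positivity)
      (pow_le_one₀ (by norm_num) (by norm_num)))
  rw [← ENNReal.ofReal_tsum_of_nonneg (fun k => by positivity) hsum]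
  exact ENNReal.ofReal_ne_top

end InhomogeneousKhintchine

theorem stmt2 :
    ∃ (C : Set ℝ) (ψ : ℕ → ℝ),
      ¬ C.Countable ∧
      (∀ n, 0 ≤ ψ n) ∧
      ¬ Summable (fun n : ℕ => ψ n) ∧
      ∀ y ∈ C,
        volume {x : ℝ |
          {n : ℕ | 1 ≤ n ∧ nint ((n : ℝ) * x + y) < ψ n}.Infinite} = 0 :=
  ⟨InhomogeneousKhintchine.C, InhomogeneousKhintchine.ψ, InhomogeneousKhintchine.not_countable_C,
    InhomogeneousKhintchine.ψ_nonneg, InhomogeneousKhintchine.not_summable_ψ, fun _ hy =>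
      volume_badSet_eq_zero (InhomogeneousKhintchine.volume_badSet_inter_Ico_eq_zero hy)⟩
end

section
/- For any ε > 0, any integer ℓ ≥ 1, and any real numbers y_1, …, y_ℓ, the series ∑ 1/(n+1), taken over all integers n ≥ 1 satisfying max_{1≤i≤ℓ} ‖n·y_i‖ < ε, diverges. -/
open MeasureTheory Filter Set

/-!
Split `[0, 1)^ℓ` into `M^ℓ` cubes of side `1/M < ε`, and place `n` in the cube containing the
fractional parts of `n y_i`. Whenever `m < n` lie in the same cube, `d = n - m` satisfies
`‖d y_i‖ < ε` for all `i`. By the pigeonhole principle one cube contains at least `N / M^ℓ` of the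
integers below `N`, and their differences with the smallest of them give `N / M^ℓ - 1` such `d`
below `N`. So the set of these `d` has positive lower density, and `∑ 1/(n+1)` over a set of
positive lower density diverges: every block `[K, 2 M^ℓ (K+1))` contributes at least
`1 / (2 M^ℓ)`, against the Cauchy criterion.
-/

open scoped Finset

theorem nint_le_abs_sub_intCast_s8 (x : ℝ) (k : ℤ) : nint x ≤ |x - k| :=
  round_le x k

theorem abs_fract_sub_fract_lt_of_floor_eq {M : ℕ} (hM : 0 < M) {x y : ℝ}
    (h : ⌊Int.fract x * M⌋₊ = ⌊Int.fract y * M⌋₊) : |Int.fract x - Int.fract y| < 1 / M := by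
  have hM' : (0 : ℝ) < M := Nat.cast_pos.mpr hM
  have hx := Nat.floor_le (mul_nonneg (Int.fract_nonneg x) hM'.le)
  have hy := Nat.floor_le (mul_nonneg (Int.fract_nonneg y) hM'.le)
  have hx' := Nat.lt_floor_add_one (Int.fract x * M)
  have hy' := Nat.lt_floor_add_one (Int.fract y * M)
  rw [h] at hx hx'
  rw [lt_div_iff₀ hM', ← abs_of_pos hM', ← abs_mul, sub_mul, abs_sub_lt_iff]
  constructor <;> linarith

theorem nint_sub_lt_of_floor_fract_mul_eq {M : ℕ} (hM : 0 < M) {x y : ℝ}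
    (h : ⌊Int.fract x * M⌋₊ = ⌊Int.fract y * M⌋₊) : nint (x - y) < 1 / M :=
  calc nint (x - y) ≤ |x - y - ((⌊x⌋ - ⌊y⌋ : ℤ) : ℝ)| := nint_le_abs_sub_intCast_s8 _ _
    _ = |Int.fract x - Int.fract y| := by
      rw [Int.fract, Int.fract]
      push_cast
      congr 1
      ring
    _ < 1 / M := abs_fract_sub_fract_lt_of_floor_eq hM h

theorem le_card_mul_card_filter_of_return {α : Type*} [Fintype α] (g : ℕ → α) {P : ℕ → Prop}
    [DecidablePred P] (hP : ∀ m d, 0 < d → g (m + d) = g m → P d) (N : ℕ) :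
    N ≤ Fintype.card α * (#{d ∈ Finset.range N | P d} + 1) := by
  classical
  rcases N.eq_zero_or_pos with rfl | hN
  · exact Nat.zero_le _
  have hα : 0 < Fintype.card α := Fintype.card_pos_iff.mpr ⟨g 0⟩
  obtain ⟨a, -, ha⟩ := Finset.exists_le_card_fiber_of_nsmul_le_card_of_maps_to
    (s := Finset.range N)
    (f := g) (b := (N : ℚ) / Fintype.card α) (fun _ _ => Finset.mem_univ _)
    ⟨g 0, Finset.mem_univ _⟩ (by
      rw [Finset.card_univ, Finset.card_range, nsmul_eq_mul, mul_div_cancel₀]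
      exact_mod_cast hα.ne')
  set F := {n ∈ Finset.range N | g n = a}
  have hF : N ≤ Fintype.card α * #F := by
    rw [div_le_iff₀ (by exact_mod_cast hα), mul_comm] at ha
    exact_mod_cast ha
  have hFne : F.Nonempty := Finset.card_pos.mp (Nat.pos_of_mul_pos_left (hN.trans_le hF))
  set m := F.min' hFne
  have hmF : m ∈ F := F.min'_mem hFne
  have hmem : ∀ n ∈ F, n < N ∧ g n = g m := fun n hn => by
    rw [Finset.mem_filter, Finset.mem_range] at hn hmF
    exact ⟨hn.1, hn.2.trans hmF.2.symm⟩
  have hsub : (F.erase m).image (· - m) ⊆ {d ∈ Finset.range N | P d} := by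
    simp only [Finset.subset_iff, Finset.mem_image, Finset.mem_filter, Finset.mem_range]
    rintro _ ⟨n, hn, rfl⟩
    have hmn : m < n :=
      (F.min'_le n (Finset.mem_of_mem_erase hn)).lt_of_ne (Finset.ne_of_mem_erase hn).symm
    obtain ⟨hnN, hgn⟩ := hmem n (Finset.mem_of_mem_erase hn)
    exact ⟨by omega, hP m (n - m) (by omega) (by rwa [Nat.add_sub_cancel' hmn.le])⟩
  have hcard : #((F.erase m).image (· - m)) = #F - 1 := by
    rw [Finset.card_image_of_injOn, Finset.card_erase_of_mem hmF]
    intro a ha b hb hab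
    have := F.min'_le a (Finset.mem_of_mem_erase ha)
    have := F.min'_le b (Finset.mem_of_mem_erase hb)
    simp only at hab
    omega
  calc N ≤ Fintype.card α * #F := hF
    _ ≤ Fintype.card α * (#{d ∈ Finset.range N | P d} + 1) := by
      gcongr
      have := Finset.card_le_card hsub
      omega

theorem le_pow_mul_card_filter_nint_lt {ι : Type*} [Fintype ι] (y : ι → ℝ) {M : ℕ} (hM : 0 < M)
    (N : ℕ) : N ≤ M ^ Fintype.card ι *
      (#{d ∈ Finset.range N | 1 ≤ d ∧ ∀ i, nint ((d : ℕ) * y i) < 1 / M} + 1) := by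
  classical
  have hcell (x : ℝ) : ⌊Int.fract x * M⌋₊ < M := by
    rw [Nat.floor_lt (mul_nonneg (Int.fract_nonneg x) (Nat.cast_nonneg M))]
    exact mul_lt_of_lt_one_left (Nat.cast_pos.mpr hM) (Int.fract_lt_one x)
  let cell : ℕ → ι → Fin M := fun n i => ⟨⌊Int.fract (n * y i) * M⌋₊, hcell _⟩
  simpa only [Fintype.card_fun, Fintype.card_fin] using
    le_card_mul_card_filter_of_return cell (fun m d hd hmd => ⟨hd, fun i => by
      have := nint_sub_lt_of_floor_fract_mul_eq hM (congrArg Fin.val (congrFun hmd i))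
      rwa [Nat.cast_add, add_mul, add_sub_cancel_left] at this⟩) N

theorem card_filter_range_sub_le_mul_sum_Ico (P : ℕ → Prop) [DecidablePred P] (K N : ℕ) :
    (#{n ∈ Finset.range N | P n} : ℝ) - K ≤
      N * ∑ n ∈ Finset.Ico K N, if P n then 1 / ((n : ℝ) + 1) else 0 := by
  have hsplit : #{n ∈ Finset.range N | P n} ≤ K + #{n ∈ Finset.Ico K N | P n} :=
    calc #{n ∈ Finset.range N | P n}
        ≤ #(Finset.range K ∪ {n ∈ Finset.Ico K N | P n}) := Finset.card_le_card fun n hn => by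
          simp only [Finset.mem_filter, Finset.mem_range, Finset.mem_union, Finset.mem_Ico] at hn ⊢
          rcases lt_or_ge n K with h | h
          · exact .inl h
          · exact .inr ⟨⟨h, hn.1⟩, hn.2⟩
      _ ≤ K + #{n ∈ Finset.Ico K N | P n} :=
          (Finset.card_union_le (Finset.range K) _).trans_eq (by rw [Finset.card_range])
  have hterm : (#{n ∈ Finset.Ico K N | P n} : ℝ) ≤
      N * ∑ n ∈ Finset.Ico K N, if P n then 1 / ((n : ℝ) + 1) else 0 := by
    rw [← Finset.sum_filter, Finset.mul_sum, Finset.card_eq_sum_ones, Nat.cast_sum]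
    refine Finset.sum_le_sum fun n hn => ?_
    have hnN : (n : ℝ) + 1 ≤ N := by
      exact_mod_cast (Finset.mem_Ico.mp (Finset.mem_filter.mp hn).1).2
    rw [Nat.cast_one, mul_one_div, le_div_iff₀ (by positivity), one_mul]
    exact hnN
  have : (#{n ∈ Finset.range N | P n} : ℝ) ≤ K + #{n ∈ Finset.Ico K N | P n} := by
    exact_mod_cast hsplit
  linarith

theorem not_summable_one_div_of_le_mul_card_filter (P : ℕ → Prop) [DecidablePred P] {c : ℕ}
    (hP : ∀ N, N ≤ c * (#{n ∈ Finset.range N | P n} + 1)) :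
    ¬ Summable fun n : ℕ => if P n then 1 / ((n : ℝ) + 1) else 0 := by
  intro hsum
  have hc : (0 : ℝ) < c := Nat.cast_pos.mpr (Nat.pos_of_mul_pos_right (hP 1))
  obtain ⟨s, hs⟩ := hsum.vanishing (Iio_mem_nhds (by positivity : (0 : ℝ) < 1 / (2 * c)))
  set K := s.sup id + 1
  set N := 2 * c * (K + 1)
  have hdisj : Disjoint (Finset.Ico K N) s := Finset.disjoint_left.mpr fun n hn hns => by
    have : n ≤ s.sup id := Finset.le_sup (f := id) hns
    have := (Finset.mem_Ico.mp hn).1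
    omega
  have hsmall := hs _ hdisj
  have hlarge := card_filter_range_sub_le_mul_sum_Ico P K N
  have hcount : (N : ℝ) ≤ c * (#{n ∈ Finset.range N | P n} + 1) := by exact_mod_cast hP N
  rw [Set.mem_Iio, lt_div_iff₀ (by positivity)] at hsmall
  simp only [N, Nat.cast_mul, Nat.cast_add, Nat.cast_ofNat, Nat.cast_one] at hlarge hcount hsmall
  have hdense : 2 * ((K : ℝ) + 1) ≤ #{n ∈ Finset.range N | P n} + 1 :=
    le_of_mul_le_mul_left (by linarith) hc
  nlinarith

theorem stmt8_general (ε : ℝ) (hε : 0 < ε) (ℓ : ℕ) (y : Fin ℓ → ℝ) :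
    ¬ Summable (fun n : ℕ =>
      if 1 ≤ n ∧ ∀ i : Fin ℓ, nint ((n : ℝ) * y i) < ε then 1 / ((n : ℝ) + 1) else 0) := by
  obtain ⟨M, hMε⟩ := exists_nat_one_div_lt hε
  refine not_summable_one_div_of_le_mul_card_filter _ (c := (M + 1) ^ ℓ) fun N => ?_
  refine (Fintype.card_fin ℓ ▸ le_pow_mul_card_filter_nint_lt y M.succ_pos N).trans ?_
  gcongr
  exact_mod_cast hMε.le

theorem stmt8 (ε : ℝ) (hε : 0 < ε) (ℓ : ℕ) (hℓ : 1 ≤ ℓ) (y : Fin ℓ → ℝ) :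
    ¬ Summable (fun n : ℕ =>
      if 1 ≤ n ∧ ∀ i : Fin ℓ, nint ((n : ℝ) * y i) < ε then 1 / ((n : ℝ) + 1) else 0) :=
  stmt8_general ε hε ℓ y
end

section
/- Let (y_m)_{m≥1} be a sequence of real numbers that is equidistributed modulo 1, let n and k be distinct positive integers, and let α, β be real numbers with 0 ≤ α ≤ 1/2 and 0 ≤ β ≤ 1/2. Then the limit as M → ∞ of (1/M) ∑_{m=1}^M λ({x ∈ [0,1] : ‖n·x + y_m‖ < α and ‖k·x + y_m‖ < β}) exists and equals 4·α·β, where λ denotes Lebesgue measure. -/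
open MeasureTheory Filter Set

/-- A sequence of reals is equidistributed modulo one if for every subinterval
`[a,b] ⊆ [0,1]`, the proportion of `m ≤ M` whose fractional part lies in `[a,b]`
tends to `b - a`. -/
def EquidistributedMod1 (y : ℕ → ℝ) : Prop :=
  ∀ a b : ℝ, 0 ≤ a → a ≤ b → b ≤ 1 →
    Tendsto (fun M : ℕ =>
        (((Finset.Icc 1 M).filter (fun m => Int.fract (y m) ∈ Set.Icc a b)).card : ℝ) / M)
      atTop (nhds (b - a))

lemma tendsto_of_forall_approx {ι α : Type*} [PseudoMetricSpace α] {l : Filter ι} {u : ι → α}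
    {c : α} (h : ∀ ε > 0, ∃ v : ι → α, ∃ d, Tendsto v l (nhds d) ∧
      (∀ᶠ i in l, dist (u i) (v i) ≤ ε) ∧ dist d c ≤ ε) :
    Tendsto u l (nhds c) := by
  refine Metric.tendsto_nhds.2 fun ε hε => ?_
  obtain ⟨v, d, hv, huv, hdc⟩ := h (ε / 3) (by positivity)
  filter_upwards [huv, Metric.tendsto_nhds.1 hv (ε / 3) (by positivity)] with i hui hvi
  linarith [dist_triangle4 (u i) (v i) d c]

lemma Nat.floor_mul_eq_iff_mem_Ico {N : ℕ} (hN : 0 < N) {z : ℝ} (hz : 0 ≤ z) {i : ℕ} :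
    ⌊N * z⌋₊ = i ↔ z ∈ Ico (i / N : ℝ) ((i + 1) / N) := by
  have hN' : (0 : ℝ) < N := Nat.cast_pos.2 hN
  rw [Nat.floor_eq_iff (by positivity), mem_Ico, div_le_iff₀ hN', lt_div_iff₀ hN', mul_comm z]

lemma abs_sum_div_sub_integral_le {f : ℝ → ℝ} (hf : Continuous f) {N : ℕ} (hN : 0 < N) {ε : ℝ}
    (hosc : ∀ s ∈ Icc (0 : ℝ) 1, ∀ t ∈ Icc (0 : ℝ) 1, dist s t ≤ 1 / N → dist (f s) (f t) ≤ ε) :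
    |∑ i ∈ Finset.range N, f (i / N) / N - ∫ t in (0 : ℝ)..1, f t| ≤ ε := by
  have hN' : (0 : ℝ) < N := Nat.cast_pos.2 hN
  set a : ℕ → ℝ := fun i => i / N with ha
  have hlen : ∀ i, a (i + 1) - a i = 1 / N := fun i => by simp only [ha]; push_cast; ring
  have hcell : ∀ i ∈ Finset.range N, |f (a i) / N - ∫ t in a i..a (i + 1), f t| ≤ ε / N := by
    intro i hi
    have hai : a i ∈ Icc (0 : ℝ) 1 :=
      ⟨by positivity, div_le_one_of_le₀ (by exact_mod_cast (Finset.mem_range.1 hi).le) hN'.le⟩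
    have hai' : a (i + 1) ≤ 1 :=
      div_le_one_of_le₀ (by exact_mod_cast Finset.mem_range.1 hi) hN'.le
    have hconst : f (a i) / N = ∫ _ in a i..a (i + 1), f (a i) := by
      rw [intervalIntegral.integral_const, hlen, smul_eq_mul]; ring
    rw [hconst,
      ← intervalIntegral.integral_sub intervalIntegrable_const (hf.intervalIntegrable _ _)]
    calc ‖∫ t in a i..a (i + 1), (f (a i) - f t)‖ ≤ ε * |a (i + 1) - a i| := by
          refine intervalIntegral.norm_integral_le_of_norm_le_const fun t ht => ?_
          rw [uIoc_of_le (by linarith [hlen i, one_div_pos.2 hN'])] at ht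
          refine hosc _ hai t ⟨hai.1.trans ht.1.le, ht.2.trans hai'⟩ ?_
          rw [Real.dist_eq, abs_of_neg (by linarith [ht.1])]
          linarith [ht.2, hlen i]
      _ = ε / N := by rw [hlen, abs_of_pos (one_div_pos.2 hN')]; ring
  have hsplit : ∫ t in (0 : ℝ)..1, f t = ∑ i ∈ Finset.range N, ∫ t in a i..a (i + 1), f t := by
    rw [intervalIntegral.sum_integral_adjacent_intervals fun i _ => hf.intervalIntegrable _ _]
    simp [ha, hN'.ne']
  rw [hsplit, ← Finset.sum_sub_distrib]
  calc _ ≤ ∑ i ∈ Finset.range N, |f (a i) / N - ∫ t in a i..a (i + 1), f t| :=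
        Finset.abs_sum_le_sum_abs _ _
    _ ≤ ∑ _i ∈ Finset.range N, ε / N := Finset.sum_le_sum hcell
    _ = ε := by rw [Finset.sum_const, Finset.card_range, nsmul_eq_mul]; field_simp

lemma EquidistributedMod1.tendsto_card_Ico {y : ℕ → ℝ} (hy : EquidistributedMod1 y) {p q : ℝ}
    (hp : 0 ≤ p) (hpq : p ≤ q) (hq : q ≤ 1) :
    Tendsto (fun M : ℕ =>
        (((Finset.Icc 1 M).filter (fun m => Int.fract (y m) ∈ Ico p q)).card : ℝ) / M)
      atTop (nhds (q - p)) := by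
  have hsplit : ∀ M : ℕ,
      (((Finset.Icc 1 M).filter (fun m => Int.fract (y m) ∈ Ico p q)).card : ℝ) =
        ((Finset.Icc 1 M).filter (fun m => Int.fract (y m) ∈ Icc p q)).card -
          ((Finset.Icc 1 M).filter (fun m => Int.fract (y m) ∈ Icc q q)).card := by
    intro M
    rw [eq_sub_iff_add_eq, ← Nat.cast_add, ← Finset.card_union_of_disjoint, ← Finset.filter_or]
    · congr 2
      exact Finset.filter_congr fun m _ => by rw [Icc_self, ← mem_union, Ico_union_right hpq]
    · exact Finset.disjoint_filter.2 fun m _ hlt hq => hlt.2.not_ge hq.1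
  simpa only [hsplit, sub_div, sub_self, sub_zero] using
    (hy p q hp hpq hq).sub (hy q q (hp.trans hpq) le_rfl hq)

lemma EquidistributedMod1.tendsto_average_floor {y : ℕ → ℝ} (hy : EquidistributedMod1 y)
    (g : ℝ → ℝ) {N : ℕ} (hN : 0 < N) :
    Tendsto (fun M : ℕ => (∑ m ∈ Finset.Icc 1 M, g (⌊N * Int.fract (y m)⌋₊ / N)) / M) atTop
      (nhds (∑ i ∈ Finset.range N, g (i / N) / N)) := by
  have hN' : (0 : ℝ) < N := Nat.cast_pos.2 hN
  have hfiber : ∀ M : ℕ, ∑ m ∈ Finset.Icc 1 M, g (⌊N * Int.fract (y m)⌋₊ / N) =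
      ∑ i ∈ Finset.range N, g (i / N) *
        ((Finset.Icc 1 M).filter
          fun m => Int.fract (y m) ∈ Ico (i / N : ℝ) ((i + 1) / N)).card := by
    intro M
    rw [← Finset.sum_fiberwise_of_maps_to (t := Finset.range N) fun m _ => Finset.mem_range.2 <|
      (Nat.floor_lt (by positivity)).2 (mul_lt_of_lt_one_right hN' (Int.fract_lt_one _))]
    refine Finset.sum_congr rfl fun i _ => ?_
    rw [Finset.sum_congr rfl fun m hm => by rw [(Finset.mem_filter.1 hm).2], Finset.sum_const,
      nsmul_eq_mul, mul_comm]
    congr 3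
    exact Finset.filter_congr fun m _ => Nat.floor_mul_eq_iff_mem_Ico hN (Int.fract_nonneg _)
  simp only [hfiber, Finset.sum_div, mul_div_assoc]
  refine tendsto_finsetSum _ fun i hi => ?_
  have hcount := hy.tendsto_card_Ico (p := i / N) (q := (i + 1) / N) (by positivity)
    (by gcongr; linarith) (div_le_one_of_le₀ (by exact_mod_cast Finset.mem_range.1 hi) hN'.le)
  rw [show g (i / N) / N = g (i / N) * ((i + 1) / N - i / N) by ring]
  exact tendsto_const_nhds.mul hcount

theorem EquidistributedMod1.tendsto_average {y : ℕ → ℝ} (hy : EquidistributedMod1 y)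
    {f : ℝ → ℝ} (hf : Continuous f) (hper : Function.Periodic f 1) :
    Tendsto (fun M : ℕ => (∑ m ∈ Finset.Icc 1 M, f (y m)) / M) atTop
      (nhds (∫ t in (0 : ℝ)..1, f t)) := by
  refine tendsto_of_forall_approx fun ε hε => ?_
  obtain ⟨δ, hδ, hfδ⟩ := Metric.uniformContinuousOn_iff_le.1
    (isCompact_Icc.uniformContinuousOn_of_continuous hf.continuousOn) ε hε
  obtain ⟨N, hN, hNδ⟩ : ∃ N : ℕ, 0 < N ∧ 1 / (N : ℝ) ≤ δ := by
    obtain ⟨N, hN⟩ := exists_nat_one_div_lt hδ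
    exact ⟨N + 1, N.succ_pos, by exact_mod_cast hN.le⟩
  refine ⟨_, _, hy.tendsto_average_floor f hN, ?_, ?_⟩
  · have hstep : ∀ z ∈ Ico (0 : ℝ) 1, dist (f z) (f (⌊N * z⌋₊ / N)) ≤ ε := by
      intro z hz
      have hcell := (Nat.floor_mul_eq_iff_mem_Ico hN hz.1).1 rfl
      have hlen : ((⌊N * z⌋₊ : ℝ) + 1) / N - ⌊N * z⌋₊ / N = 1 / N := by ring
      refine hfδ z (Ico_subset_Icc_self hz) _ ⟨by positivity, hcell.1.trans hz.2.le⟩ ?_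
      rw [Real.dist_eq, abs_of_nonneg (by linarith [hcell.1])]
      linarith [hcell.2]
    have hfract : ∀ t, f (Int.fract t) = f t := fun t => by
      rw [Int.fract, ← mul_one (⌊t⌋ : ℝ), hper.sub_int_mul_eq]
    filter_upwards [eventually_gt_atTop 0] with M hM
    rw [Real.dist_eq, ← sub_div, ← Finset.sum_sub_distrib, abs_div, Nat.abs_cast,
      div_le_iff₀ (Nat.cast_pos.2 hM)]
    calc |∑ m ∈ Finset.Icc 1 M, (f (y m) - f (⌊N * Int.fract (y m)⌋₊ / N))|
        ≤ ∑ m ∈ Finset.Icc 1 M, |f (y m) - f (⌊N * Int.fract (y m)⌋₊ / N)| :=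
          Finset.abs_sum_le_sum_abs _ _
      _ ≤ ∑ _m ∈ Finset.Icc 1 M, ε := Finset.sum_le_sum fun m _ => by
          rw [← hfract (y m), ← Real.dist_eq]
          exact hstep _ ⟨Int.fract_nonneg _, Int.fract_lt_one _⟩
      _ = ε * M := by simp [mul_comm]
  · rw [Real.dist_eq]
    exact abs_sum_div_sub_integral_le hf hN fun s hs t ht hst => hfδ s hs t ht (hst.trans hNδ)

lemma intervalIntegral_integral_swap {f : ℝ → ℝ → ℝ} (hf : Measurable (Function.uncurry f))
    {C : ℝ} (hC : ∀ x y, ‖f x y‖ ≤ C) {a b c d : ℝ} (hab : a ≤ b) (hcd : c ≤ d) :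
    ∫ x in a..b, ∫ y in c..d, f x y = ∫ y in c..d, ∫ x in a..b, f x y := by
  simp only [intervalIntegral.integral_of_le hab, intervalIntegral.integral_of_le hcd]
  exact integral_integral_swap <|
    Integrable.of_bound hf.aestronglyMeasurable C (Eventually.of_forall fun z => hC z.1 z.2)

lemma Function.Periodic.intervalIntegral_comp_int_mul_add {p : ℝ → ℝ} (hp : Function.Periodic p 1)
    (hpi : IntervalIntegrable p volume 0 1) {c : ℤ} (hc : c ≠ 0) (s : ℝ) :
    ∫ x in (0 : ℝ)..1, p (c * x + s) = ∫ x in (0 : ℝ)..1, p x := by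
  have hc' : (c : ℝ) ≠ 0 := Int.cast_ne_zero.2 hc
  have hpi' := hp.intervalIntegrable one_ne_zero (t := 0) (by rwa [zero_add])
  have hshift : ∫ x in s..s + c, p x = c • ∫ x in (0 : ℝ)..1, p x := by
    rw [← zsmul_one (R := ℝ) c, hp.intervalIntegral_add_zsmul_eq c s hpi',
      hp.intervalIntegral_add_eq s 0, zero_add]
  rw [intervalIntegral.integral_comp_mul_add p hc', mul_zero, zero_add, mul_one, add_comm,
    hshift, zsmul_eq_mul, smul_eq_mul, inv_mul_cancel_left₀ hc']

lemma Measurable.intervalIntegrable_of_bound {p : ℝ → ℝ} (hp : Measurable p) {C : ℝ}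
    (hC : ∀ t, ‖p t‖ ≤ C) (a b : ℝ) : IntervalIntegrable p volume a b :=
  (intervalIntegrable_const (c := C)).mono_fun hp.aestronglyMeasurable
    (ae_of_all _ fun t => (hC t).trans (le_abs_self C))

theorem integral_integral_comp_int_mul_add_mul {p q : ℝ → ℝ} (hp : Function.Periodic p 1)
    (hq : Function.Periodic q 1) (hpm : Measurable p) (hqm : Measurable q) {C D : ℝ}
    (hpC : ∀ t, ‖p t‖ ≤ C) (hqD : ∀ t, ‖q t‖ ≤ D) {n k : ℤ} (hnk : n ≠ k) :
    ∫ t in (0 : ℝ)..1, ∫ x in (0 : ℝ)..1, p (n * x + t) * q (k * x + t) =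
      (∫ t in (0 : ℝ)..1, p t) * ∫ t in (0 : ℝ)..1, q t := by
  have hbound : ∀ u v, ‖p u * q v‖ ≤ C * D := fun u v => norm_mul_le_of_le (hpC u) (hqD v)
  have hshift : ∀ x : ℝ, ∫ t in (0 : ℝ)..1, p (n * x + t) * q (k * x + t) =
      ∫ t in (0 : ℝ)..1, p ((n - k) * x + t) * q t := by
    intro x
    have hper : Function.Periodic (fun t => p ((n - k) * x + t) * q t) 1 :=
      (hp.const_add _).mul hq
    have hint : IntervalIntegrable (fun t => p ((n - k) * x + t) * q t) volume 0 1 :=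
      ((hpm.comp (measurable_const_add _)).mul hqm).intervalIntegrable_of_bound
        (fun t => hbound _ _) 0 1
    rw [← hper.intervalIntegral_comp_int_mul_add hint one_ne_zero (k * x)]
    congr 1 with t
    simp only [Int.cast_one, one_mul]
    ring_nf
  have hpi := hpm.intervalIntegrable_of_bound hpC 0 1
  have hnk' : n - k ≠ 0 := sub_ne_zero.2 hnk
  calc ∫ t in (0 : ℝ)..1, ∫ x in (0 : ℝ)..1, p (n * x + t) * q (k * x + t)
      = ∫ x in (0 : ℝ)..1, ∫ t in (0 : ℝ)..1, p ((n - k) * x + t) * q t := by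
        rw [intervalIntegral_integral_swap (by fun_prop) (fun _ _ => hbound _ _) zero_le_one
          zero_le_one]
        exact intervalIntegral.integral_congr fun x _ => hshift x
    _ = ∫ t in (0 : ℝ)..1, (∫ x in (0 : ℝ)..1, p ((n - k : ℤ) * x + t)) * q t := by
        rw [intervalIntegral_integral_swap (by fun_prop) (fun _ _ => hbound _ _) zero_le_one
          zero_le_one]
        push_cast
        simp only [intervalIntegral.integral_mul_const]
    _ = (∫ t in (0 : ℝ)..1, p t) * ∫ t in (0 : ℝ)..1, q t := by
        simp only [hp.intervalIntegral_comp_int_mul_add hpi hnk',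
          intervalIntegral.integral_const_mul]

lemma ae_continuousAt_comp_mul_add {p : ℝ → ℝ} (hp : {t | ¬ContinuousAt p t}.Countable)
    {c : ℝ} (hc : c ≠ 0) (t₀ : ℝ) : ∀ᵐ x, ContinuousAt (fun t => p (c * x + t)) t₀ := by
  have hexc : ((fun x => c * x + t₀) ⁻¹' {t | ¬ContinuousAt p t}).Countable :=
    hp.preimage fun x y hxy => mul_left_cancel₀ hc (add_right_cancel hxy)
  filter_upwards [hexc.ae_notMem volume] with x hx
  simp only [mem_preimage, mem_ofPred_eq, not_not] at hx
  exact hx.comp_of_eq (continuousAt_const.add continuousAt_id) rfl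

lemma continuous_intervalIntegral_comp_mul_add_mul {p q : ℝ → ℝ} (hpm : Measurable p)
    (hqm : Measurable q) {C D : ℝ} (hpC : ∀ t, ‖p t‖ ≤ C) (hqD : ∀ t, ‖q t‖ ≤ D)
    (hpc : {t | ¬ContinuousAt p t}.Countable) (hqc : {t | ¬ContinuousAt q t}.Countable)
    {c₁ c₂ : ℝ} (hc₁ : c₁ ≠ 0) (hc₂ : c₂ ≠ 0) (a b : ℝ) :
    Continuous fun t => ∫ x in a..b, p (c₁ * x + t) * q (c₂ * x + t) := by
  refine continuous_iff_continuousAt.2 fun t₀ =>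
    intervalIntegral.continuousAt_of_dominated_interval (bound := fun _ => C * D)
      (Eventually.of_forall fun t => (by fun_prop : Measurable _).aestronglyMeasurable)
      (Eventually.of_forall fun t => ae_of_all _ fun x _ => norm_mul_le_of_le (hpC _) (hqD _))
      intervalIntegrable_const ?_
  filter_upwards [ae_continuousAt_comp_mul_add hpc hc₁ t₀, ae_continuousAt_comp_mul_add hqc hc₂ t₀]
    with x hpx hqx _ using hpx.mul hqx

lemma toReal_volume_Icc_inter_eq_integral {s : Set ℝ} (hs : MeasurableSet s) {a b : ℝ}
    (hab : a ≤ b) : (volume (Icc a b ∩ s)).toReal = ∫ x in a..b, s.indicator 1 x := by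
  rw [intervalIntegral.integral_of_le hab, ← integral_Icc_eq_integral_Ioc,
    integral_indicator_one hs, measureReal_restrict_apply hs, inter_comm, measureReal_def]

lemma nint_eq_norm (t : ℝ) : nint t = ‖(t : UnitAddCircle)‖ :=
  UnitAddCircle.norm_eq.symm

lemma continuous_nint : Continuous nint := by
  simp only [funext nint_eq_norm]
  exact continuous_norm.comp (AddCircle.continuous_mk' 1)

lemma periodic_nint : Function.Periodic nint 1 := fun t => by
  simp only [nint_eq_norm, AddCircle.coe_add_period]

lemma countable_nint_eq (a : ℝ) : {t : ℝ | nint t = a}.Countable := by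
  refine ((countable_range fun m : ℤ => m + a).union (countable_range fun m : ℤ => m - a)).mono ?_
  intro t (ht : |t - round t| = a)
  rcases (abs_eq (ht ▸ abs_nonneg _)).1 ht with h | h
  · exact Or.inl ⟨round t, by linarith⟩
  · exact Or.inr ⟨round t, by linarith⟩

lemma measurable_indicator_nint_lt (a : ℝ) :
    Measurable ({t : ℝ | nint t < a}.indicator (1 : ℝ → ℝ)) :=
  measurable_one.indicator (measurableSet_lt continuous_nint.measurable measurable_const)

lemma norm_indicator_nint_lt_le (a t : ℝ) : ‖{t : ℝ | nint t < a}.indicator (1 : ℝ → ℝ) t‖ ≤ 1 :=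
  (norm_indicator_le_norm_self _ _).trans (by simp)

lemma periodic_indicator_nint_lt (a : ℝ) :
    Function.Periodic ({t : ℝ | nint t < a}.indicator (1 : ℝ → ℝ)) 1 := fun t => by
  simp only [indicator, mem_ofPred_eq, periodic_nint t, Pi.one_apply]

lemma countable_not_continuousAt_indicator_nint_lt (a : ℝ) :
    {t : ℝ | ¬ContinuousAt ({t : ℝ | nint t < a}.indicator (1 : ℝ → ℝ)) t}.Countable := by
  refine (countable_nint_eq a).mono fun t ht => ?_
  by_contra hfr
  exact ht (continuousOn_const.continuousAt_indicator
    fun h => hfr (frontier_lt_subset_eq continuous_nint continuous_const h))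

lemma integral_indicator_nint_lt {a : ℝ} (ha₀ : 0 ≤ a) (ha : a ≤ 1 / 2) :
    ∫ t in (0 : ℝ)..1, {t : ℝ | nint t < a}.indicator 1 t = 2 * a := by
  have hcircle := UnitAddCircle.intervalIntegral_preimage 0
    ((Metric.ball (0 : UnitAddCircle) a).indicator (1 : UnitAddCircle → ℝ))
  rw [zero_add] at hcircle
  calc ∫ t in (0 : ℝ)..1, {t : ℝ | nint t < a}.indicator 1 t
      = ∫ t in (0 : ℝ)..1, (Metric.ball (0 : UnitAddCircle) a).indicator 1 (t : UnitAddCircle) := by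
        simp only [indicator, mem_ofPred_eq, Metric.mem_ball, dist_zero_right, nint_eq_norm,
          Pi.one_apply]
    _ = volume.real (Metric.ball (0 : UnitAddCircle) a) :=
        hcircle.trans (integral_indicator_one measurableSet_ball)
    _ = 2 * a := by
        rw [measureReal_def, ← measure_congr AddCircle.closedBall_ae_eq_ball,
          AddCircle.volume_closedBall, min_eq_right (by linarith),
          ENNReal.toReal_ofReal (by linarith)]

lemma toReal_volume_nint_lt_and_nint_lt (c₁ c₂ a b t : ℝ) :
    (volume {x ∈ Icc (0 : ℝ) 1 | nint (c₁ * x + t) < a ∧ nint (c₂ * x + t) < b}).toReal =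
      ∫ x in (0 : ℝ)..1, {t : ℝ | nint t < a}.indicator 1 (c₁ * x + t) *
        {t : ℝ | nint t < b}.indicator 1 (c₂ * x + t) := by
  have hS : MeasurableSet {x : ℝ | nint (c₁ * x + t) < a ∧ nint (c₂ * x + t) < b} :=
    (measurableSet_lt (continuous_nint.measurable.comp (by fun_prop)) measurable_const).inter
      (measurableSet_lt (continuous_nint.measurable.comp (by fun_prop)) measurable_const)
  rw [← inter_ofPred_eq_sep, toReal_volume_Icc_inter_eq_integral hS zero_le_one]
  refine intervalIntegral.integral_congr fun x _ => ?_
  by_cases h₁ : nint (c₁ * x + t) < a <;> by_cases h₂ : nint (c₂ * x + t) < b <;>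
    simp [indicator, h₁, h₂]

theorem stmt14 (y : ℕ → ℝ) (hy : EquidistributedMod1 y) (n k : ℕ)
    (hn : 1 ≤ n) (hk : 1 ≤ k) (hnk : n ≠ k)
    (α β : ℝ) (hα0 : 0 ≤ α) (hα : α ≤ 1 / 2) (hβ0 : 0 ≤ β) (hβ : β ≤ 1 / 2) :
    Tendsto (fun M : ℕ =>
        (∑ m ∈ Finset.Icc 1 M,
          (volume {x ∈ Set.Icc (0:ℝ) 1 |
            nint ((n : ℝ) * x + y m) < α ∧ nint ((k : ℝ) * x + y m) < β}).toReal) / M)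
      atTop (nhds (4 * α * β)) := by
  set F : ℝ → ℝ := fun t => ∫ x in (0 : ℝ)..1, {t : ℝ | nint t < α}.indicator 1 (n * x + t) *
    {t : ℝ | nint t < β}.indicator 1 (k * x + t)
  have hcont : Continuous F :=
    continuous_intervalIntegral_comp_mul_add_mul (measurable_indicator_nint_lt α)
      (measurable_indicator_nint_lt β) (norm_indicator_nint_lt_le α) (norm_indicator_nint_lt_le β)
      (countable_not_continuousAt_indicator_nint_lt α)
      (countable_not_continuousAt_indicator_nint_lt β)
      (Nat.cast_ne_zero.2 (by omega)) (Nat.cast_ne_zero.2 (by omega)) 0 1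
  have hper : Function.Periodic F 1 := fun t => intervalIntegral.integral_congr fun x _ => by
    rw [← add_assoc, ← add_assoc, periodic_indicator_nint_lt, periodic_indicator_nint_lt]
  have hint : ∫ t in (0 : ℝ)..1, F t = 4 * α * β := by
    have hfubini := integral_integral_comp_int_mul_add_mul (periodic_indicator_nint_lt α)
      (periodic_indicator_nint_lt β) (measurable_indicator_nint_lt α)
      (measurable_indicator_nint_lt β) (norm_indicator_nint_lt_le α) (norm_indicator_nint_lt_le β)
      (Int.natCast_inj.not.2 hnk)
    simp only [Int.cast_natCast] at hfubini
    rw [hfubini, integral_indicator_nint_lt hα0 hα, integral_indicator_nint_lt hβ0 hβ]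
    ring
  simpa only [toReal_volume_nint_lt_and_nint_lt, hint] using hy.tendsto_average hcont hper
end

section
/- For a positive integer n, let L(n) denote the length of the longest interval of consecutive integers each of which fails to be coprime to n (i.e., the largest number of consecutive integers each sharing a common factor greater than 1 with n). Then L(n) = o(n) as n → ∞; that is, L(n)/n → 0. -/
/-!
Legendre's sieve: by Möbius inversion, an interval of `L` integers contains `L φ(n) / n` integers
coprime to `n` up to an error of at most `2 ^ ω(n)`, where `ω(n)` is the number of prime factors
of `n` (so `2 ^ ω(n)` counts the squarefree divisors). A run of integers none of which is coprime
to `n` therefore has `L ≤ 2 ^ ω(n) n / φ(n) ≤ 4 ^ ω(n)`. Finally `16 ^ ω(n) ≤ 16 ^ 16 n`, since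
fewer than 16 prime factors lie below 16 and the product of the others is at most `n`; hence
`L ≤ 4 ^ 16 √n`.
-/

open MeasureTheory Filter Set

/-- `runLen n` is the length of the longest run of consecutive integers each of which
fails to be coprime to `n`. -/
noncomputable def runLen (n : ℕ) : ℕ :=
  sSup {L : ℕ | ∃ a : ℤ, ∀ j ∈ Finset.Icc 1 L, 1 < Int.gcd (a + (j : ℤ)) (n : ℤ)}

open Finset ArithmeticFunction ArithmeticFunction.Moebius

theorem Int.abs_mul_card_multiples_Ioc_sub_lt {a b : ℤ} (hab : a ≤ b) {d : ℕ} (hd : 0 < d) :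
    |(d : ℤ) * #{x ∈ Ioc a b | (d : ℤ) ∣ x} - (b - a)| < d := by
  have hd' : (0 : ℤ) < d := by exact_mod_cast hd
  have hcard : (#{x ∈ Ioc a b | (d : ℤ) ∣ x} : ℤ) = b / d - a / d := by
    rw [Int.Ioc_filter_dvd_card a b hd']
    push_cast
    rw [Rat.floor_intCast_div_natCast, Rat.floor_intCast_div_natCast,
      max_eq_left (sub_nonneg.2 (Int.ediv_le_ediv hd' hab))]
  rw [hcard, abs_sub_lt_iff]
  constructor <;> linarith [Int.emod_add_mul_ediv a d, Int.emod_add_mul_ediv b d,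
    Int.emod_nonneg a hd'.ne', Int.emod_nonneg b hd'.ne', Int.emod_lt_of_pos a hd',
    Int.emod_lt_of_pos b hd']

theorem Nat.sum_divisors_moebius (m : ℕ) : ∑ d ∈ m.divisors, μ d = if m = 1 then 1 else 0 := by
  rw [← coe_mul_zeta_apply, moebius_mul_coe_zeta, one_apply]

theorem Nat.sum_divisors_abs_moebius {n : ℕ} (hn : n ≠ 0) :
    ∑ d ∈ n.divisors, |μ d| = 2 ^ #n.primeFactors := by
  simp only [abs_moebius, ← Finset.sum_filter, Nat.sum_divisors_filter_squarefree hn, sum_const,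
    card_powerset]
  rw [nsmul_eq_mul, mul_one, Nat.cast_pow, Nat.cast_ofNat, Nat.factors_eq]
  rfl

theorem Nat.totient_eq_sum_moebius (n : ℕ) :
    (n.totient : ℤ) = ∑ d ∈ n.divisors, μ d * (n / d : ℕ) := by
  rcases n.eq_zero_or_pos with rfl | hn
  · simp
  have := (sum_eq_iff_sum_mul_moebius_eq (R := ℤ) (f := fun d => (d.totient : ℤ))
    (g := fun d => (d : ℤ))).1 (fun n _ => by exact_mod_cast Nat.sum_totient n) n hn
  rw [← this, ← Nat.sum_divisorsAntidiagonal (fun d e => μ d * (e : ℤ))]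
  simp only [Int.cast_id]

theorem Nat.le_two_pow_card_primeFactors_mul_totient (n : ℕ) :
    n ≤ 2 ^ #n.primeFactors * n.totient := by
  have hP : 0 < ∏ p ∈ n.primeFactors, p :=
    prod_pos fun p hp => (Nat.prime_of_mem_primeFactors hp).pos
  refine Nat.le_of_mul_le_mul_right ?_ hP
  calc n * ∏ p ∈ n.primeFactors, p ≤ n * ∏ p ∈ n.primeFactors, 2 * (p - 1) := by
        gcongr with p hp
        have := (Nat.prime_of_mem_primeFactors hp).two_le
        omega
    _ = 2 ^ #n.primeFactors * n.totient * ∏ p ∈ n.primeFactors, p := by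
        rw [mul_assoc, Nat.totient_mul_prod_primeFactors, prod_mul_distrib, prod_const]
        ring

theorem Int.divisors_gcd_natCast {n : ℕ} (hn : n ≠ 0) (x : ℤ) :
    (Int.gcd x n).divisors = {d ∈ n.divisors | ((d : ℕ) : ℤ) ∣ x} := by
  ext d
  simp only [Int.gcd_eq_natAbs_gcd_natAbs, Int.natAbs_natCast, Nat.mem_divisors, Nat.dvd_gcd_iff,
    ne_eq, Nat.gcd_eq_zero_iff, Int.natAbs_eq_zero, hn, and_false, not_false_eq_true, and_true,
    Int.natCast_dvd, mem_filter]
  exact and_comm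

theorem card_coprime_Ioc_eq_sum_moebius {n : ℕ} (hn : n ≠ 0) (a b : ℤ) :
    (#{x ∈ Ioc a b | Int.gcd x n = 1} : ℤ) =
      ∑ d ∈ n.divisors, μ d * #{x ∈ Ioc a b | (d : ℤ) ∣ x} := by
  calc (#{x ∈ Ioc a b | Int.gcd x n = 1} : ℤ)
      = ∑ x ∈ Ioc a b, ∑ d ∈ n.divisors with ((d : ℕ) : ℤ) ∣ x, μ d := by
        simp_rw [← Int.divisors_gcd_natCast hn, Nat.sum_divisors_moebius, natCast_card_filter]
    _ = ∑ d ∈ n.divisors, ∑ x ∈ Ioc a b with (d : ℤ) ∣ x, μ d := by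
        simp_rw [sum_filter]
        exact sum_comm
    _ = _ := by simp_rw [sum_const, nsmul_eq_mul, mul_comm]

theorem abs_mul_card_coprime_Ioc_sub_le {n : ℕ} (hn : n ≠ 0) {a b : ℤ} (hab : a ≤ b) :
    |n * (#{x ∈ Ioc a b | Int.gcd x n = 1} : ℤ) - (b - a) * n.totient| ≤
      2 ^ #n.primeFactors * n := by
  set M : ℕ → ℤ := fun d => #{x ∈ Ioc a b | (d : ℤ) ∣ x}
  have hsplit : n * (#{x ∈ Ioc a b | Int.gcd x n = 1} : ℤ) - (b - a) * n.totient =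
      ∑ d ∈ n.divisors, μ d * ((n / d : ℕ) * (d * M d - (b - a))) := by
    rw [card_coprime_Ioc_eq_sum_moebius hn, Nat.totient_eq_sum_moebius, mul_sum, mul_sum,
      ← sum_sub_distrib]
    refine sum_congr rfl fun d hd => ?_
    have : ((n / d : ℕ) : ℤ) * d = n := by
      exact_mod_cast Nat.div_mul_cancel (Nat.dvd_of_mem_divisors hd)
    linear_combination (μ d * M d) * this.symm
  have hterm : ∀ d ∈ n.divisors, |μ d * ((n / d : ℕ) * (d * M d - (b - a)))| ≤ |μ d| * n := by
    intro d hd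
    have : ((n / d : ℕ) : ℤ) * d = n := by
      exact_mod_cast Nat.div_mul_cancel (Nat.dvd_of_mem_divisors hd)
    rw [abs_mul, abs_mul, Nat.abs_cast]
    gcongr
    rw [← this]
    gcongr
    exact (Int.abs_mul_card_multiples_Ioc_sub_lt hab (Nat.pos_of_mem_divisors hd)).le
  calc _ = |∑ d ∈ n.divisors, μ d * ((n / d : ℕ) * (d * M d - (b - a)))| := by rw [hsplit]
    _ ≤ ∑ d ∈ n.divisors, |μ d * ((n / d : ℕ) * (d * M d - (b - a)))| := abs_sum_le_sum_abs _ _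
    _ ≤ ∑ d ∈ n.divisors, |μ d| * n := sum_le_sum hterm
    _ = 2 ^ #n.primeFactors * n := by rw [← sum_mul, Nat.sum_divisors_abs_moebius hn]

theorem sub_le_four_pow_of_forall_gcd_ne_one {n : ℕ} (hn : n ≠ 0) {a b : ℤ} (hab : a ≤ b)
    (h : ∀ x ∈ Finset.Ioc a b, Int.gcd x n ≠ 1) : b - a ≤ 4 ^ #n.primeFactors := by
  have hsieve := abs_mul_card_coprime_Ioc_sub_le hn hab
  rw [filter_false_of_mem h, Finset.card_empty, Nat.cast_zero, mul_zero, zero_sub, abs_neg,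
    abs_mul, abs_of_nonneg (sub_nonneg.2 hab), Nat.abs_cast] at hsieve
  have htot : (n : ℤ) ≤ 2 ^ #n.primeFactors * n.totient := by
    exact_mod_cast Nat.le_two_pow_card_primeFactors_mul_totient n
  have hpos : (0 : ℤ) < n.totient := by exact_mod_cast Nat.totient_pos.2 (Nat.pos_of_ne_zero hn)
  refine le_of_mul_le_mul_right ?_ hpos
  calc (b - a) * n.totient ≤ 2 ^ #n.primeFactors * n := hsieve
    _ ≤ 2 ^ #n.primeFactors * (2 ^ #n.primeFactors * n.totient) := by gcongr
    _ = 4 ^ #n.primeFactors * n.totient := by rw [← mul_assoc, ← mul_pow]; norm_num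

theorem runLen_le_four_pow {n : ℕ} (hn : n ≠ 0) : runLen n ≤ 4 ^ #n.primeFactors := by
  refine csSup_le ⟨0, 0, by simp⟩ ?_
  rintro L ⟨a, ha⟩
  have h : ∀ x ∈ Finset.Ioc a (a + L), Int.gcd x n ≠ 1 := by
    intro x hx
    rw [Finset.mem_Ioc] at hx
    obtain ⟨j, rfl⟩ : ∃ j : ℕ, x = a + j := ⟨(x - a).toNat, by omega⟩
    exact (ha j (Finset.mem_Icc.2 ⟨by omega, by omega⟩)).ne'
  have := sub_le_four_pow_of_forall_gcd_ne_one hn (le_add_of_nonneg_right L.cast_nonneg) h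
  rw [add_sub_cancel_left] at this
  exact_mod_cast this

theorem Nat.pow_card_primeFactors_le (c : ℕ) {n : ℕ} (hn : n ≠ 0) :
    c ^ #n.primeFactors ≤ c ^ c * n := by
  rcases c.eq_zero_or_pos with rfl | hc
  · simpa using (pow_le_one₀ (le_refl 0) zero_le_one).trans (Nat.one_le_iff_ne_zero.2 hn)
  have hsmall : #{p ∈ n.primeFactors | p < c} ≤ c :=
    (Finset.card_le_card fun p hp => mem_range.2 (mem_filter.1 hp).2).trans (card_range c).le
  have hlarge : c ^ #{p ∈ n.primeFactors | ¬p < c} ≤ n :=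
    calc c ^ #{p ∈ n.primeFactors | ¬p < c}
        = ∏ _p ∈ {p ∈ n.primeFactors | ¬p < c}, c := (prod_const c).symm
      _ ≤ ∏ p ∈ n.primeFactors with ¬p < c, p :=
        prod_le_prod' fun p hp => not_lt.1 (mem_filter.1 hp).2
      _ ≤ ∏ p ∈ n.primeFactors, p :=
        prod_le_prod_of_subset_of_one_le' (filter_subset _ _)
          fun p hp _ => (Nat.prime_of_mem_primeFactors hp).one_lt.le
      _ ≤ n := Nat.le_of_dvd (Nat.pos_of_ne_zero hn) (Nat.prod_primeFactors_dvd n)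
  calc c ^ #n.primeFactors
      = c ^ #{p ∈ n.primeFactors | p < c} * c ^ #{p ∈ n.primeFactors | ¬p < c} := by
        rw [← pow_add, card_filter_add_card_filter_not]
    _ ≤ c ^ c * n := Nat.mul_le_mul (Nat.pow_le_pow_right hc hsmall) hlarge

theorem runLen_sq_le {n : ℕ} (hn : n ≠ 0) : runLen n ^ 2 ≤ 16 ^ 16 * n :=
  calc runLen n ^ 2 ≤ (4 ^ #n.primeFactors) ^ 2 := Nat.pow_le_pow_left (runLen_le_four_pow hn) 2
    _ = 16 ^ #n.primeFactors := by rw [← pow_mul, mul_comm, pow_mul]; norm_num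
    _ ≤ 16 ^ 16 * n := Nat.pow_card_primeFactors_le 16 hn

theorem runLen_div_le {n : ℕ} (hn : n ≠ 0) : (runLen n : ℝ) / n ≤ 4 ^ 16 / √n := by
  have hn' : (0 : ℝ) < n := by positivity
  have hL : (runLen n : ℝ) ≤ 4 ^ 16 * √n := by
    rw [← Real.sqrt_sq (by positivity : (0 : ℝ) ≤ 4 ^ 16), ← Real.sqrt_mul (by positivity)]
    refine Real.le_sqrt_of_sq_le ?_
    have : ((runLen n ^ 2 : ℕ) : ℝ) ≤ (16 ^ 16 * n : ℕ) := by exact_mod_cast runLen_sq_le hn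
    push_cast at this
    linarith
  rw [div_le_div_iff₀ hn' (Real.sqrt_pos.2 hn')]
  calc (runLen n : ℝ) * √n ≤ 4 ^ 16 * √n * √n := by gcongr
    _ = 4 ^ 16 * n := by rw [mul_assoc, Real.mul_self_sqrt hn'.le]

theorem stmt17 :
    Tendsto (fun n : ℕ => (runLen n : ℝ) / n) atTop (nhds 0) := by
  have hlim : Tendsto (fun n : ℕ => (4 : ℝ) ^ 16 / √n) atTop (nhds 0) :=
    tendsto_const_nhds.div_atTop (Real.tendsto_sqrt_atTop.comp tendsto_natCast_atTop_atTop)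
  refine squeeze_zero' (Eventually.of_forall fun n => by positivity) ?_ hlim
  filter_upwards [eventually_ne_atTop 0] with n hn
  exact runLen_div_le hn
end

section
/- Let (I_k)_{k≥1} be a sequence of intervals in ℝ and (U_k)_{k≥1} a sequence of Lebesgue-measurable sets such that for some real ε with 0 < ε < 1 one has U_k ⊆ I_k and λ(U_k) ≥ ε·λ(I_k) for all k, and λ(I_k) → 0 as k → ∞. Then λ(limsup_{k→∞} I_k) = λ(limsup_{k→∞} U_k), where λ denotes Lebesgue measure and the limsup of a sequence of sets is the set of points lying in infinitely many of them. -/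
/-!
By the Lebesgue density theorem for families of balls with moving centres (available for any
uniformly locally doubling measure), almost every point `d` of
`W = limsup I \ ⋃_{k ≥ K} U k` is a point of density one of `W` along the intervals `I k`
containing it. But for `k ≥ K` the interval `I k` contains `U k`, which misses `W` and fills a
proportion at least `ε` of `I k`, so the density of `W` in `I k` is at most `1 - ε`. Hence each such
`W` is null, i.e. `limsup I ⊆ limsup U` almost everywhere. Degenerate intervals only contribute
countably many points.
-/

open MeasureTheory Filter Set Metric
open scoped Topology ENNReal

theorem ENNReal.div_le_one_sub_of_add_mul_le {a b ε : ℝ≥0∞} (h : a + ε * b ≤ b) :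
    a / b ≤ 1 - ε := by
  rcases eq_or_ne b ∞ with rfl | hb
  · simp
  refine ENNReal.div_le_of_le_mul ?_
  rw [ENNReal.sub_mul fun _ _ => hb, one_mul]
  exact ENNReal.le_sub_of_add_le_right (le_add_self.trans h |>.trans_lt hb.lt_top).ne h

theorem blimsup_closedBall_ae_le_blimsup {α : Type*} [PseudoMetricSpace α]
    [SecondCountableTopology α] [MeasurableSpace α] [BorelSpace α] (μ : Measure α)
    [IsLocallyFiniteMeasure μ] [IsUnifLocDoublingMeasure μ] (p : ℕ → Prop) {c : ℕ → α}
    {r : ℕ → ℝ} (hr : Tendsto r atTop (𝓝 0)) (hrp : ∀ k, p k → 0 < r k) {U : ℕ → Set α}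
    (hU : ∀ k, MeasurableSet (U k)) (hUB : ∀ k, U k ⊆ closedBall (c k) (r k)) {ε : ℝ≥0∞}
    (hε : 0 < ε) (hbig : ∀ k, ε * μ (closedBall (c k) (r k)) ≤ μ (U k)) :
    (blimsup (fun k => closedBall (c k) (r k)) atTop p : Set α) ≤ᵐ[μ]
      (blimsup U atTop p : Set α) := by
  set B : ℕ → Set α := fun k => closedBall (c k) (r k)
  suffices ∀ K, μ (blimsup B atTop p \ ⋃ (k) (_ : p k ∧ K ≤ k), U k) = 0 by
    rwa [ae_le_set, blimsup_eq_iInf_biSup_of_nat (u := U), iInf_eq_iInter, sdiff_iInter,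
      measure_iUnion_null_iff]
  intro K
  set W := blimsup B atTop p \ ⋃ (k) (_ : p k ∧ K ≤ k), U k
  by_contra hW
  obtain ⟨d, ⟨hdB, -⟩, hd⟩ := Measure.exists_mem_of_measure_ne_zero_of_ae hW
    (IsUnifLocDoublingMeasure.ae_tendsto_measure_inter_div μ W 1)
  let l := atTop ⊓ 𝓟 {k | p k ∧ d ∈ B k}
  have : l.NeBot := by
    rw [blimsup_eq_limsup, mem_limsup_iff_frequently_mem, frequently_inf_principal] at hdB
    exact frequently_iff_neBot.mp hdB
  have hl : ∀ᶠ k in l, p k ∧ K ≤ k ∧ d ∈ B k :=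
    eventually_inf_principal.mpr <| (eventually_ge_atTop K).mono fun k hK hk => ⟨hk.1, hK, hk.2⟩
  have hdensity : Tendsto (fun k => μ (W ∩ B k) / μ (B k)) l (𝓝 1) := by
    refine hd c r ?_ (hl.mono fun k hk => by rw [one_mul]; exact hk.2.2)
    exact tendsto_nhdsWithin_iff.mpr ⟨hr.mono_left inf_le_left, hl.mono fun k hk => hrp k hk.1⟩
  have hsparse : ∀ᶠ k in l, μ (W ∩ B k) / μ (B k) ≤ 1 - ε := by
    refine hl.mono fun k ⟨hpk, hKk, _⟩ => ENNReal.div_le_one_sub_of_add_mul_le ?_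
    have hdisj : Disjoint (W ∩ B k) (U k) := by
      refine Disjoint.inter_left _ (disjoint_sdiff_left.mono_right ?_)
      exact subset_biUnion_of_mem (u := U) (show k ∈ {k | p k ∧ K ≤ k} from ⟨hpk, hKk⟩)
    calc μ (W ∩ B k) + ε * μ (B k) ≤ μ (W ∩ B k) + μ (U k) := by gcongr; exact hbig k
      _ = μ (W ∩ B k ∪ U k) := (measure_union hdisj (hU k)).symm
      _ ≤ μ (B k) := measure_mono (union_subset inter_subset_right (hUB k))
  exact (ENNReal.sub_lt_self ENNReal.one_ne_top one_ne_zero hε.ne').not_ge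
    (le_of_tendsto hdensity hsparse)

theorem limsup_closedBall_ae_le_limsup {α : Type*} [MetricSpace α] [SecondCountableTopology α]
    [MeasurableSpace α] [BorelSpace α] (μ : Measure α) [IsLocallyFiniteMeasure μ]
    [IsUnifLocDoublingMeasure μ] [NullSingletonClass μ] {c : ℕ → α} {r : ℕ → ℝ}
    (hr : Tendsto r atTop (𝓝 0)) {U : ℕ → Set α} (hU : ∀ k, MeasurableSet (U k))
    (hUB : ∀ k, U k ⊆ closedBall (c k) (r k)) {ε : ℝ≥0∞} (hε : 0 < ε)
    (hbig : ∀ k, ε * μ (closedBall (c k) (r k)) ≤ μ (U k)) :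
    (limsup (fun k => closedBall (c k) (r k)) atTop : Set α) ≤ᵐ[μ] (limsup U atTop : Set α) := by
  have hdegenerate :
      (blimsup (fun k => closedBall (c k) (r k)) atTop fun k => ¬0 < r k : Set α) ⊆ range c := by
    intro x hx
    rw [blimsup_eq_limsup, mem_limsup_iff_frequently_mem, frequently_inf_principal] at hx
    obtain ⟨k, hrk, hxk⟩ := hx.exists
    exact ⟨k, (dist_le_zero.mp (le_trans hxk (not_lt.mp hrk))).symm⟩
  have hnull : (blimsup (fun k => closedBall (c k) (r k)) atTop fun k => ¬0 < r k : Set α)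
      ≤ᵐ[μ] (limsup U atTop : Set α) :=
    ae_le_set.mpr <|
      measure_mono_null (sdiff_subset.trans hdegenerate) ((countable_range c).measure_zero μ)
  have hle : (blimsup U atTop fun k => 0 < r k) ≤ limsup U atTop :=
    blimsup_true atTop U ▸ blimsup_mono fun _ _ => trivial
  rw [← blimsup_true, ← funext fun k => eq_true (em (0 < r k)), blimsup_or_eq_sup]
  exact ((blimsup_closedBall_ae_le_blimsup μ _ hr (fun _ => id) hU hUB hε hbig).union hnull).trans
    (union_subset hle subset_rfl).eventuallyLE

theorem Real.exists_closedBall_volume_eq_of_Ioo_subset_of_subset_Icc {s : Set ℝ} {a b : ℝ}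
    (h₁ : Ioo a b ⊆ s) (h₂ : s ⊆ Icc a b) :
    ∃ c r, 0 ≤ r ∧ s ⊆ closedBall c r ∧ volume (closedBall c r) = volume s := by
  rcases le_or_gt a b with hab | hba
  · refine ⟨(a + b) / 2, (b - a) / 2, by linarith, Real.Icc_eq_closedBall a b ▸ h₂, ?_⟩
    rw [← Real.Icc_eq_closedBall]
    refine le_antisymm ?_ (measure_mono h₂)
    rw [Real.volume_Icc, ← Real.volume_Ioo]
    exact measure_mono h₁
  · have hs : s = ∅ := subset_empty_iff.mp (h₂.trans (Icc_eq_empty_of_lt hba).subset)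
    exact ⟨a, 0, le_rfl, by simp [hs], by simp [hs]⟩

theorem stmt18_general (I U : ℕ → Set ℝ)
    (hI : ∀ k, ∃ a b : ℝ, Set.Ioo a b ⊆ I k ∧ I k ⊆ Set.Icc a b)
    (hU : ∀ k, MeasurableSet (U k))
    (ε : ℝ) (hε0 : 0 < ε)
    (hsub : ∀ k, U k ⊆ I k)
    (hbig : ∀ k, ENNReal.ofReal ε * volume (I k) ≤ volume (U k))
    (hto0 : Tendsto (fun k => volume (I k)) atTop (nhds 0)) :
    volume {x : ℝ | {k : ℕ | x ∈ I k}.Infinite} =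
      volume {x : ℝ | {k : ℕ | x ∈ U k}.Infinite} := by
  choose c r hr0 hIB hvol using fun k =>
    have ⟨_, _, h₁, h₂⟩ := hI k
    Real.exists_closedBall_volume_eq_of_Ioo_subset_of_subset_Icc h₁ h₂
  have hr : Tendsto r atTop (𝓝 0) := by
    have h := (ENNReal.tendsto_toReal ENNReal.zero_ne_top).comp hto0
    simp only [Function.comp_def, ← hvol, Real.volume_closedBall,
      ENNReal.toReal_ofReal (mul_nonneg zero_le_two (hr0 _)), ENNReal.toReal_zero] at h
    simpa using h.div_const 2
  have hUB k : U k ⊆ closedBall (c k) (r k) := (hsub k).trans (hIB k)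
  have hbig' k : ENNReal.ofReal ε * volume (closedBall (c k) (r k)) ≤ volume (U k) :=
    hvol k ▸ hbig k
  simp only [← cofinite.limsup_set_eq, Nat.cofinite_eq_atTop]
  refine le_antisymm ?_ (measure_mono (limsup_le_limsup (.of_forall hsub)))
  calc volume (limsup I atTop)
      ≤ volume (limsup (fun k => closedBall (c k) (r k)) atTop) :=
        measure_mono (limsup_le_limsup (.of_forall hIB))
    _ ≤ volume (limsup U atTop) := measure_mono_ae <|
        limsup_closedBall_ae_le_limsup volume hr hU hUB (ENNReal.ofReal_pos.mpr hε0) hbig'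

theorem stmt18 (I U : ℕ → Set ℝ)
    (hI : ∀ k, ∃ a b : ℝ, Set.Ioo a b ⊆ I k ∧ I k ⊆ Set.Icc a b)
    (hU : ∀ k, MeasurableSet (U k))
    (ε : ℝ) (hε0 : 0 < ε) (hε1 : ε < 1)
    (hsub : ∀ k, U k ⊆ I k)
    (hbig : ∀ k, ENNReal.ofReal ε * volume (I k) ≤ volume (U k))
    (hto0 : Tendsto (fun k => volume (I k)) atTop (nhds 0)) :
    volume {x : ℝ | {k : ℕ | x ∈ I k}.Infinite} =
      volume {x : ℝ | {k : ℕ | x ∈ U k}.Infinite} :=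
  stmt18_general I U hI hU ε hε0 hsub hbig hto0
end
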